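/- arXiv:2211.15212 — 8 statements merged into one kernel-verified Lean document; each statement's English description precedes it below -/
import Mathlib

section
/- Let X and Y be nonnegative random variables defined on a common probability space and let C > 0. Assume that P(X > t) ~ C t^{-1/2} as t → ∞, i.e. lim_{t→∞} t^{1/2} P(X > t) = C. Then the following two assertions are equivalent: (i) lim_{t→∞} t^{1/2} P(Y > t) = 0; (ii) P(X + Y > t) ~ C t^{-1/2} as t → ∞, i.e. lim_{t→∞} t^{1/2} P(X + Y > t) = C. (No independence between X and Y is assumed.) -/
open MeasureTheory Filter Topology Set

/-!
The lower bound `P(X > t) ≤ P(X + Y > t)` is free. For the upper bound, `X + Y > t` forces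
`X > a t` or `Y > (1 - a) t`; rescaling the tail of `X` by `a` costs a factor `a^{-1/2}`, which
tends to `1` as `a → 1`. Conversely, on `{Y > t, X ≤ k t}` the sum `X + Y` passes one of the
levels `j t`, `1 ≤ j ≤ k`, that `X` does not reach, so
`P(Y > t) ≤ P(X > k t) + ∑ j, (P(X + Y > j t) - P(X > j t))`. Each difference is `o(t^{-1/2})`
when both tails are `~ C t^{-1/2}`, and `t^{1/2} P(X > k t) → k^{-1/2} C` is small for large `k`.
-/

lemma tendsto_rpow_mul_comp_const_mul {φ : ℝ → ℝ} {p L a : ℝ} (ha : 0 < a)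
    (h : Tendsto (fun t => t ^ p * φ t) atTop (𝓝 L)) :
    Tendsto (fun t => t ^ p * φ (a * t)) atTop (𝓝 (a ^ (-p) * L)) := by
  refine ((h.comp (tendsto_id.const_mul_atTop ha)).const_mul (a ^ (-p))).congr' ?_
  filter_upwards [eventually_ge_atTop 0] with t ht
  have hap : a ^ p ≠ 0 := (Real.rpow_pos_of_pos ha p).ne'
  rw [Function.comp_apply, id, Real.mul_rpow ha.le ht, Real.rpow_neg ha.le]
  field_simp

lemma tendsto_rpow_mul_of_le_of_le_add_comp_mul {F G H : ℝ → ℝ} {p C : ℝ}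
    (hF : Tendsto (fun t => t ^ p * F t) atTop (𝓝 C))
    (hG : Tendsto (fun t => t ^ p * G t) atTop (𝓝 0))
    (hFH : ∀ t, F t ≤ H t)
    (hHFG : ∀ a ∈ Ioo (0 : ℝ) 1, ∀ t, H t ≤ F (a * t) + G ((1 - a) * t)) :
    Tendsto (fun t => t ^ p * H t) atTop (𝓝 C) := by
  refine tendsto_order.2 ⟨fun c hc => ?_, fun c hc => ?_⟩
  · filter_upwards [hF.eventually_const_lt hc, eventually_ge_atTop 0] with t hct ht
    exact hct.trans_le (mul_le_mul_of_nonneg_left (hFH t) (Real.rpow_nonneg ht p))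
  · obtain ⟨a, hac, ha⟩ : ∃ a : ℝ, a ^ (-p) * C < c ∧ a ∈ Ioo 0 1 := by
      have hcont : Tendsto (fun a : ℝ => a ^ (-p) * C) (𝓝[<] 1) (𝓝 C) := by
        have := (Real.continuousAt_rpow_const 1 (-p) (Or.inl one_ne_zero)).mul_const C
        simpa using this.tendsto.mono_left nhdsWithin_le_nhds
      exact ((hcont.eventually_lt_const hc).and (Ioo_mem_nhdsLT zero_lt_one)).exists
    have hbound := (tendsto_rpow_mul_comp_const_mul ha.1 hF).add
      (tendsto_rpow_mul_comp_const_mul (sub_pos.2 ha.2) hG)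
    rw [mul_zero, add_zero] at hbound
    filter_upwards [hbound.eventually_lt_const hac, eventually_ge_atTop 0] with t hct ht
    calc t ^ p * H t ≤ t ^ p * (F (a * t) + G ((1 - a) * t)) :=
          mul_le_mul_of_nonneg_left (hHFG a ha t) (Real.rpow_nonneg ht p)
      _ < c := by rwa [mul_add]

lemma tendsto_rpow_mul_zero_of_le_add_sum_sub {F G H : ℝ → ℝ} {p C : ℝ} (hp : 0 < p)
    (hF : Tendsto (fun t => t ^ p * F t) atTop (𝓝 C))
    (hH : Tendsto (fun t => t ^ p * H t) atTop (𝓝 C))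
    (hG : ∀ t, 0 ≤ G t)
    (hGFH : ∀ k : ℕ, 1 ≤ k → ∀ t, 0 < t →
      G t ≤ F (k * t) + ∑ j ∈ Finset.Icc 1 k, (H (j * t) - F (j * t))) :
    Tendsto (fun t => t ^ p * G t) atTop (𝓝 0) := by
  refine tendsto_order.2 ⟨fun c hc => ?_, fun c hc => ?_⟩
  · filter_upwards [eventually_ge_atTop 0] with t ht
    exact hc.trans_le (mul_nonneg (Real.rpow_nonneg ht p) (hG t))
  · obtain ⟨k, hkc, hk⟩ : ∃ k : ℕ, (k : ℝ) ^ (-p) * C < c ∧ 1 ≤ k := by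
      have : Tendsto (fun k : ℕ => (k : ℝ) ^ (-p) * C) atTop (𝓝 0) := by
        simpa using ((tendsto_rpow_neg_atTop hp).comp tendsto_natCast_atTop_atTop).mul_const C
      exact ((this.eventually_lt_const hc).and (eventually_ge_atTop 1)).exists
    have hbound : Tendsto (fun t => t ^ p * F (k * t)
        + ∑ j ∈ Finset.Icc 1 k, (t ^ p * H (j * t) - t ^ p * F (j * t))) atTop
        (𝓝 ((k : ℝ) ^ (-p) * C)) := by
      have hdiff : ∀ j ∈ Finset.Icc 1 k,
          Tendsto (fun t => t ^ p * H (j * t) - t ^ p * F (j * t)) atTop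
            (𝓝 ((j : ℝ) ^ (-p) * C - (j : ℝ) ^ (-p) * C)) := fun j hj =>
        have hj : (0 : ℝ) < j := Nat.cast_pos.2 (Finset.mem_Icc.1 hj).1
        (tendsto_rpow_mul_comp_const_mul hj hH).sub (tendsto_rpow_mul_comp_const_mul hj hF)
      simpa using (tendsto_rpow_mul_comp_const_mul (Nat.cast_pos.2 hk) hF).add
        (tendsto_finsetSum _ hdiff)
    filter_upwards [hbound.eventually_lt_const hkc, eventually_gt_atTop 0] with t hct ht
    calc t ^ p * G t ≤ t ^ p * (F (k * t) + ∑ j ∈ Finset.Icc 1 k, (H (j * t) - F (j * t))) :=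
          mul_le_mul_of_nonneg_left (hGFH k hk t ht) (Real.rpow_nonneg ht.le p)
      _ < c := by simpa only [mul_add, Finset.mul_sum, mul_sub] using hct

lemma exists_mem_Icc_le_mul_le_add {x t : ℝ} (hx : 0 ≤ x) (ht : 0 < t) {k : ℕ} (hk : 1 ≤ k)
    (hxk : x ≤ k * t) : ∃ j ∈ Finset.Icc 1 k, x ≤ j * t ∧ j * t ≤ x + t := by
  have hxt : 0 ≤ x / t := div_nonneg hx ht.le
  refine ⟨max 1 ⌈x / t⌉₊, Finset.mem_Icc.2 ⟨le_max_left _ _, max_le hk ?_⟩, ?_, ?_⟩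
  · exact Nat.ceil_le.2 ((div_le_iff₀ ht).2 hxk)
  · rw [← div_le_iff₀ ht]
    exact (Nat.le_ceil _).trans (by exact_mod_cast le_max_right _ _)
  · have hj : ((max 1 ⌈x / t⌉₊ : ℕ) : ℝ) ≤ x / t + 1 := by
      push_cast
      exact max_le (by linarith) (Nat.ceil_lt_add_one hxt).le
    calc _ ≤ (x / t + 1) * t := mul_le_mul_of_nonneg_right hj ht.le
      _ = x + t := by field_simp

section Tails

variable {Ω : Type*} [MeasurableSpace Ω] {μ : Measure Ω} [IsFiniteMeasure μ] {X Y : Ω → ℝ}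

lemma measureReal_lt_le_measureReal_lt_add (hY : ∀ ω, 0 ≤ Y ω) (t : ℝ) :
    μ.real {ω | t < X ω} ≤ μ.real {ω | t < X ω + Y ω} :=
  measureReal_mono fun ω (hω : t < X ω) => show t < X ω + Y ω by linarith [hY ω]

lemma measureReal_add_lt_le (s r : ℝ) :
    μ.real {ω | s + r < X ω + Y ω} ≤ μ.real {ω | s < X ω} + μ.real {ω | r < Y ω} := by
  refine (measureReal_mono fun ω hω => ?_).trans (measureReal_union_le _ _)
  by_contra h
  simp only [mem_union, mem_ofPred_eq, not_or, not_lt] at hω h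
  linarith

lemma measureReal_lt_le_add_sum_sub (hX : Measurable X) (hXnn : ∀ ω, 0 ≤ X ω)
    (hYnn : ∀ ω, 0 ≤ Y ω) {k : ℕ} (hk : 1 ≤ k) {t : ℝ} (ht : 0 < t) :
    μ.real {ω | t < Y ω} ≤ μ.real {ω | k * t < X ω}
      + ∑ j ∈ Finset.Icc 1 k,
          (μ.real {ω | j * t < X ω + Y ω} - μ.real {ω | j * t < X ω}) := by
  have hcover : {ω | t < Y ω} ⊆ {ω | k * t < X ω}
      ∪ ⋃ j ∈ Finset.Icc 1 k, ({ω | j * t < X ω + Y ω} \ {ω | j * t < X ω}) := by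
    intro ω (hω : t < Y ω)
    rcases lt_or_ge (k * t) (X ω) with hXk | hXk
    · exact Or.inl hXk
    · obtain ⟨j, hj, hXj, hjX⟩ := exists_mem_Icc_le_mul_le_add (hXnn ω) ht hk hXk
      have hjXY : (j : ℝ) * t < X ω + Y ω := by linarith
      exact Or.inr (mem_iUnion₂.2 ⟨j, hj, hjXY, hXj.not_gt⟩)
  calc μ.real {ω | t < Y ω} ≤ _ := measureReal_mono hcover
    _ ≤ _ := measureReal_union_le _ _
    _ ≤ μ.real {ω | k * t < X ω} + ∑ j ∈ Finset.Icc 1 k,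
          μ.real ({ω | j * t < X ω + Y ω} \ {ω | j * t < X ω}) :=
        by gcongr; exact measureReal_biUnion_finset_le _ _
    _ = _ := by
      congr 1
      refine Finset.sum_congr rfl fun j _ =>
        measureReal_sdiff ?_ (measurableSet_lt measurable_const hX)
      exact fun ω (hω : _ < X ω) => show _ < X ω + Y ω by linarith [hYnn ω]

end Tails

theorem stmt0_general
    {Ω : Type*} [MeasurableSpace Ω] (μ : Measure Ω) [IsProbabilityMeasure μ]
    (X Y : Ω → ℝ) (hX : Measurable X)
    (hXpos : ∀ ω, 0 ≤ X ω) (hYpos : ∀ ω, 0 ≤ Y ω)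
    (C : ℝ)
    (hXtail : Tendsto (fun t : ℝ => t ^ ((1 : ℝ) / 2) * (μ {ω | t < X ω}).toReal)
      atTop (𝓝 C)) :
    Tendsto (fun t : ℝ => t ^ ((1 : ℝ) / 2) * (μ {ω | t < Y ω}).toReal) atTop (𝓝 0)
      ↔ Tendsto (fun t : ℝ => t ^ ((1 : ℝ) / 2) * (μ {ω | t < X ω + Y ω}).toReal)
          atTop (𝓝 C) := by
  simp only [← measureReal_def] at hXtail ⊢
  constructor
  · intro hYtail
    refine tendsto_rpow_mul_of_le_of_le_add_comp_mul hXtail hYtail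
      (measureReal_lt_le_measureReal_lt_add hYpos) fun a _ t => ?_
    simpa only [← add_mul, add_sub_cancel, one_mul] using
      measureReal_add_lt_le (a * t) ((1 - a) * t)
  · intro hXYtail
    exact tendsto_rpow_mul_zero_of_le_add_sum_sub (by norm_num) hXtail hXYtail
      (fun _ => measureReal_nonneg) fun _ hk _ ht =>
        measureReal_lt_le_add_sum_sub hX hXpos hYpos hk ht

/-- Lemma A.1 (`equiv_tail`): for nonnegative random variables `X`, `Y` with
`P(X > t) ~ C t^{-1/2}` as `t → ∞`, one has
`lim t^{1/2} P(Y > t) = 0` iff `P(X + Y > t) ~ C t^{-1/2}`. -/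
theorem stmt0
    {Ω : Type*} [MeasurableSpace Ω] (μ : Measure Ω) [IsProbabilityMeasure μ]
    (X Y : Ω → ℝ) (hX : Measurable X) (hY : Measurable Y)
    (hXpos : ∀ ω, 0 ≤ X ω) (hYpos : ∀ ω, 0 ≤ Y ω)
    (C : ℝ) (hC : 0 < C)
    (hXtail : Tendsto (fun t : ℝ => t ^ ((1 : ℝ) / 2) * (μ {ω | t < X ω}).toReal)
      atTop (𝓝 C)) :
    Tendsto (fun t : ℝ => t ^ ((1 : ℝ) / 2) * (μ {ω | t < Y ω}).toReal) atTop (𝓝 0)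
      ↔ Tendsto (fun t : ℝ => t ^ ((1 : ℝ) / 2) * (μ {ω | t < X ω + Y ω}).toReal)
          atTop (𝓝 C) :=
  stmt0_general μ X Y hX hXpos hYpos C hXtail
end

section
/- Let (X_n)_{n≥1} be a sequence of independent and identically distributed nonnegative random variables, let α ∈ (0,1), and assume lim_{t→∞} t^α P(X_1 > t) = 0. Set S_n = X_1 + ... + X_n. Then n^{-1/α} S_n converges to 0 in probability as n → ∞. -/
open MeasureTheory Filter Topology Set ProbabilityTheory

/-!
Truncate at `b = n ^ (1/α)`, so that `n = b ^ α`. The event `{S_n > ε b}` lies in the union of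
the events `{X_k > b}`, `k < n`, and `{∑ k, min (X_k, b) ≥ ε b}`. The first part has probability
at most `n P(X > b) = b ^ α P(X > b) → 0`. By Markov's inequality and the layer-cake formula the
second has probability at most `n E[min (X, b)] / (ε b) = ε⁻¹ b ^ (α - 1) ∫₀ᵇ P(X > t) dt`, which
tends to `0` because a function that is `o(t ^ (-α))` with `α < 1` has integral `o(b ^ (1 - α))`.
-/

lemma norm_intervalIntegral_le_of_norm_le_rpow {f : ℝ → ℝ} {α η a b : ℝ} (hα : α < 1)
    (ha : 0 < a) (hab : a ≤ b) (hf : ∀ t, a ≤ t → ‖f t‖ ≤ η * t ^ (-α)) :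
    ‖∫ t in a..b, f t‖ ≤ η * b ^ (1 - α) / (1 - α) := by
  have hη : 0 ≤ η := by
    have := (norm_nonneg _).trans (hf a le_rfl)
    exact nonneg_of_mul_nonneg_left this (by positivity)
  have hint : ∫ t in a..b, η * t ^ (-α) = η * (b ^ (1 - α) - a ^ (1 - α)) / (1 - α) := by
    rw [intervalIntegral.integral_const_mul, integral_rpow (Or.inl (by linarith)),
      neg_add_eq_sub, mul_div_assoc]
  calc ‖∫ t in a..b, f t‖ ≤ ∫ t in a..b, η * t ^ (-α) :=
        intervalIntegral.norm_integral_le_of_norm_le hab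
          (.of_forall fun t ht => hf t ht.1.le)
          ((intervalIntegral.intervalIntegrable_rpow' (by linarith)).const_mul η)
    _ ≤ η * b ^ (1 - α) / (1 - α) := by
        rw [hint]
        gcongr
        exact sub_le_self _ (by positivity)

lemma tendsto_rpow_mul_intervalIntegral_of_tendsto_rpow_mul {f : ℝ → ℝ} {α : ℝ} (hα : α < 1)
    (hf : ∀ b, IntervalIntegrable f volume 0 b)
    (htail : Tendsto (fun t => t ^ α * f t) atTop (𝓝 0)) :
    Tendsto (fun b => b ^ (α - 1) * ∫ t in 0..b, f t) atTop (𝓝 0) := by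
  have h1α : 0 < 1 - α := by linarith
  rw [Metric.tendsto_nhds]
  intro δ hδ
  obtain ⟨t₁, ht₁⟩ := eventually_atTop.mp <|
    (Metric.tendsto_nhds.mp htail) (δ * (1 - α) / 2) (by positivity)
  set t₀ := max t₁ 1
  have ht₀ : 0 < t₀ := zero_lt_one.trans_le (le_max_right _ _)
  have hdecay : ∀ t, t₀ ≤ t → ‖f t‖ ≤ δ * (1 - α) / 2 * t ^ (-α) := by
    intro t ht
    have htpos : 0 < t := ht₀.trans_le ht
    have h := ht₁ t ((le_max_left _ _).trans ht)
    rw [dist_zero_right, norm_mul, Real.norm_of_nonneg (by positivity)] at h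
    rw [Real.rpow_neg htpos.le, ← div_eq_mul_inv, le_div_iff₀ (by positivity), mul_comm]
    exact h.le
  have hsmall : Tendsto (fun b : ℝ => b ^ (α - 1) * ‖∫ t in 0..t₀, f t‖) atTop (𝓝 0) := by
    simpa [neg_sub] using (tendsto_rpow_neg_atTop h1α).mul_const ‖∫ t in 0..t₀, f t‖
  filter_upwards [eventually_ge_atTop t₀, hsmall.eventually (gt_mem_nhds (half_pos hδ))]
    with b hb hbsmall
  have hbpos : 0 < b := ht₀.trans_le hb
  have hsplit := intervalIntegral.integral_add_adjacent_intervals (hf t₀)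
    ((hf t₀).symm.trans (hf b))
  have hfar := norm_intervalIntegral_le_of_norm_le_rpow hα ht₀ hb hdecay
  have hcancel : b ^ (α - 1) * b ^ (1 - α) = 1 := by
    rw [← Real.rpow_add hbpos]; simp
  rw [dist_zero_right, norm_mul, Real.norm_of_nonneg (by positivity), ← hsplit]
  calc b ^ (α - 1) * ‖(∫ t in 0..t₀, f t) + ∫ t in t₀..b, f t‖
      ≤ b ^ (α - 1) * (‖∫ t in 0..t₀, f t‖ + δ * (1 - α) / 2 * b ^ (1 - α) / (1 - α)) := by
        gcongr
        exact (norm_add_le _ _).trans (by gcongr)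
    _ = b ^ (α - 1) * ‖∫ t in 0..t₀, f t‖ + δ / 2 := by
        field_simp
        linear_combination δ * hcancel
    _ < δ := by linarith

section Truncation

variable {Ω : Type*} [MeasurableSpace Ω] {μ : Measure Ω} [IsFiniteMeasure μ]

lemma integrable_min_const {Y : Ω → ℝ} (hY : AEMeasurable Y μ) (hpos : 0 ≤ᵐ[μ] Y) {b : ℝ}
    (hb : 0 ≤ b) : Integrable (fun ω => min (Y ω) b) μ :=
  Integrable.of_bound (hY.min aemeasurable_const).aestronglyMeasurable b <| by
    filter_upwards [hpos] with ω hω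
    rw [Real.norm_of_nonneg (le_min hω hb)]
    exact min_le_right _ _

lemma integral_min_eq_intervalIntegral_measureReal_lt {Y : Ω → ℝ} (hY : AEMeasurable Y μ)
    (hpos : 0 ≤ᵐ[μ] Y) {b : ℝ} (hb : 0 ≤ b) :
    ∫ ω, min (Y ω) b ∂μ = ∫ t in 0..b, μ.real {ω | t < Y ω} := by
  have hmin_pos : 0 ≤ᵐ[μ] fun ω => min (Y ω) b := by
    filter_upwards [hpos] with ω hω using le_min hω hb
  rw [(integrable_min_const hY hpos hb).integral_eq_integral_meas_lt hmin_pos,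
    intervalIntegral.integral_of_le hb, integral_Ioc_eq_integral_Ioo,
    setIntegral_eq_of_subset_of_ae_sdiff_eq_zero nullMeasurableSet_Ioi Ioo_subset_Ioi_self]
  · refine setIntegral_congr_fun measurableSet_Ioo fun t ht => ?_
    simp only [lt_min_iff, ht.2, and_true]
  · refine .of_forall fun t ht => ?_
    have hbt : b ≤ t := by
      by_contra h
      exact ht.2 ⟨ht.1, not_le.mp h⟩
    simp [not_lt.mpr hbt]

lemma measureReal_lt_inv_mul_sum_le {X : ℕ → Ω → ℝ} {Y : Ω → ℝ}
    (hpos : ∀ k, 0 ≤ᵐ[μ] X k) (hident : ∀ k, IdentDistrib (X k) Y μ μ)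
    {b ε : ℝ} (hb : 0 < b) (hε : 0 < ε) (n : ℕ) :
    μ.real {ω | ε < b⁻¹ * ∑ k ∈ Finset.range n, X k ω} ≤
      n * μ.real {ω | b < Y ω} + n * (∫ ω, min (Y ω) b ∂μ) / (ε * b) := by
  set T : Ω → ℝ := fun ω => ∑ k ∈ Finset.range n, min (X k ω) b
  have hsub : {ω | ε < b⁻¹ * ∑ k ∈ Finset.range n, X k ω} ⊆
      (⋃ k ∈ Finset.range n, {ω | b < X k ω}) ∪ {ω | ε * b ≤ T ω} := by
    intro ω hω
    rw [mem_ofPred_eq, inv_mul_eq_div, lt_div_iff₀ hb] at hω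
    by_cases hbig : ∃ k ∈ Finset.range n, b < X k ω
    · obtain ⟨k, hk, hkb⟩ := hbig
      exact Or.inl (mem_biUnion hk hkb)
    · push Not at hbig
      refine Or.inr (hω.le.trans (Finset.sum_le_sum fun k hk => ?_))
      rw [min_eq_left (hbig k hk)]
  have htail_eq : ∀ k, μ.real {ω | b < X k ω} = μ.real {ω | b < Y ω} := fun k =>
    congrArg ENNReal.toReal ((hident k).measure_mem_eq measurableSet_Ioi)
  have hint_eq : ∀ k, ∫ ω, min (X k ω) b ∂μ = ∫ ω, min (Y ω) b ∂μ := fun k =>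
    ((hident k).comp (measurable_id.min measurable_const)).integral_eq
  have hT_int : ∫ ω, T ω ∂μ = n * ∫ ω, min (Y ω) b ∂μ := by
    rw [integral_finsetSum _ fun k _ =>
      integrable_min_const (hident k).aemeasurable_fst (hpos k) hb.le]
    simp [hint_eq]
  have hmarkov : μ.real {ω | ε * b ≤ T ω} ≤ n * (∫ ω, min (Y ω) b ∂μ) / (ε * b) := by
    rw [le_div_iff₀ (by positivity), mul_comm, ← hT_int]
    refine mul_meas_ge_le_integral_of_nonneg ?_ ?_ _
    · filter_upwards [ae_all_iff.mpr hpos] with ω hω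
      exact Finset.sum_nonneg fun k _ => le_min (hω k) hb.le
    · exact integrable_finsetSum _ fun k _ =>
        integrable_min_const (hident k).aemeasurable_fst (hpos k) hb.le
  calc μ.real {ω | ε < b⁻¹ * ∑ k ∈ Finset.range n, X k ω}
      ≤ μ.real (⋃ k ∈ Finset.range n, {ω | b < X k ω}) + μ.real {ω | ε * b ≤ T ω} :=
        (measureReal_mono hsub).trans (measureReal_union_le _ _)
    _ ≤ ∑ k ∈ Finset.range n, μ.real {ω | b < X k ω} + μ.real {ω | ε * b ≤ T ω} := by
        gcongr; exact measureReal_biUnion_finset_le _ _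
    _ ≤ n * μ.real {ω | b < Y ω} + n * (∫ ω, min (Y ω) b ∂μ) / (ε * b) := by
        simp only [htail_eq, Finset.sum_const, Finset.card_range, nsmul_eq_mul]
        gcongr
end Truncation

theorem stmt1_general
    {Ω : Type*} [MeasurableSpace Ω] (μ : Measure Ω) [IsProbabilityMeasure μ]
    (X : ℕ → Ω → ℝ)
    (hpos : ∀ n ω, 0 ≤ X n ω)
    (hident : ∀ n, ProbabilityTheory.IdentDistrib (X n) (X 0) μ μ)
    (α : ℝ) (hα0 : 0 < α) (hα1 : α < 1)
    (htail : Tendsto (fun t : ℝ => t ^ α * (μ {ω | t < X 0 ω}).toReal) atTop (𝓝 0)) :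
    ∀ ε > 0, Tendsto
      (fun n : ℕ =>
        (μ {ω | ε < (n : ℝ) ^ (-(1 : ℝ) / α) * ∑ k ∈ Finset.range n, X k ω}).toReal)
      atTop (𝓝 0) := by
  intro ε hε
  set p : ℝ → ℝ := fun t => μ.real {ω | t < X 0 ω}
  have hp_anti : Antitone p := fun s t hst =>
    measureReal_mono fun ω (hω : t < X 0 ω) => hst.trans_lt hω
  have hbound : Tendsto (fun b => b ^ α * p b + ε⁻¹ * (b ^ (α - 1) * ∫ t in 0..b, p t))
      atTop (𝓝 0) := by
    have h := htail.add (Tendsto.const_mul ε⁻¹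
      (tendsto_rpow_mul_intervalIntegral_of_tendsto_rpow_mul hα1
        (fun b => hp_anti.intervalIntegrable) htail))
    rw [mul_zero, add_zero] at h
    exact h
  have hscale : Tendsto (fun n : ℕ => (n : ℝ) ^ α⁻¹) atTop atTop :=
    (tendsto_rpow_atTop (inv_pos.mpr hα0)).comp tendsto_natCast_atTop_atTop
  refine squeeze_zero' (.of_forall fun n => ENNReal.toReal_nonneg)
    ((eventually_gt_atTop 0).mono fun n hn => ?_) (hbound.comp hscale)
  set b := (n : ℝ) ^ α⁻¹
  have hb : 0 < b := by positivity
  have hn_eq : (n : ℝ) = b ^ α := (Real.rpow_inv_rpow n.cast_nonneg hα0.ne').symm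
  have hevent : (n : ℝ) ^ (-(1 : ℝ) / α) = b⁻¹ := by
    rw [neg_div, one_div, Real.rpow_neg n.cast_nonneg]
  rw [hevent]
  refine (measureReal_lt_inv_mul_sum_le (fun k => .of_forall (hpos k)) hident hb hε n).trans
    (le_of_eq ?_)
  rw [integral_min_eq_intervalIntegral_measureReal_lt (hident 0).aemeasurable_fst
    (.of_forall (hpos 0)) hb.le, hn_eq, Function.comp_apply, Real.rpow_sub_one hb.ne']
  ring

/-- Proposition A.2 (`conv_prob_0_neg`): if `(X_n)` are i.i.d. nonnegative random
variables with `t^α P(X_1 > t) → 0` for some `α ∈ (0,1)`, then `n^{-1/α} S_n → 0`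
in probability. -/
theorem stmt1
    {Ω : Type*} [MeasurableSpace Ω] (μ : Measure Ω) [IsProbabilityMeasure μ]
    (X : ℕ → Ω → ℝ) (hmeas : ∀ n, Measurable (X n))
    (hpos : ∀ n ω, 0 ≤ X n ω)
    (hindep : ProbabilityTheory.iIndepFun X μ)
    (hident : ∀ n, ProbabilityTheory.IdentDistrib (X n) (X 0) μ μ)
    (α : ℝ) (hα0 : 0 < α) (hα1 : α < 1)
    (htail : Tendsto (fun t : ℝ => t ^ α * (μ {ω | t < X 0 ω}).toReal) atTop (𝓝 0)) :
    ∀ ε > 0, Tendsto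
      (fun n : ℕ =>
        (μ {ω | ε < (n : ℝ) ^ (-(1 : ℝ) / α) * ∑ k ∈ Finset.range n, X k ω}).toReal)
      atTop (𝓝 0) :=
  stmt1_general μ X hpos hident α hα0 hα1 htail
end

section
/- Let Θ : ℝ → (0,∞) be a C¹ even function satisfying lim_{v→±∞} |v|Θ(v) = 1 and let β ∈ (1,5). Define F = (β/2)·Θ'/Θ and ℓ(v) = 2∫_0^v Θ(u)^{-β} (∫_0^u Θ(w)^β dw) du. Then ℓ is twice continuously differentiable on ℝ and solves the Poisson equation ℓ'(v) F(v) + (1/2) ℓ''(v) = 1 for every v ∈ ℝ. -/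
open MeasureTheory Filter Topology intervalIntegral

/-! With `G(u) = ∫₀ᵘ Θ^β` and `g = Θ^{-β} G`, we have `ℓ' = 2g`, and since `G' = Θ^β` the product
rule gives `g' = 1 - β (Θ'/Θ) g = 1 - 2 F g`. Hence `ℓ' F + ℓ''/2 = 2 g F + 1 - 2 F g = 1`. -/

noncomputable section

def poissonIntegrand (Θ : ℝ → ℝ) (β u : ℝ) : ℝ :=
  Θ u ^ (-β) * ∫ w in (0 : ℝ)..u, Θ w ^ β

def poissonSolution (Θ : ℝ → ℝ) (β v : ℝ) : ℝ :=
  2 * ∫ u in (0 : ℝ)..v, poissonIntegrand Θ β u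

variable {Θ : ℝ → ℝ} {β : ℝ}

theorem hasDerivAt_poissonIntegrand (hΘ : Differentiable ℝ Θ) (hpos : ∀ v, 0 < Θ v) (v : ℝ) :
    HasDerivAt (poissonIntegrand Θ β)
      (1 - β * deriv Θ v / Θ v * poissonIntegrand Θ β v) v := by
  have hG : HasDerivAt (fun u => ∫ w in (0 : ℝ)..u, Θ w ^ β) (Θ v ^ β) v :=
    ((hΘ.continuous.rpow_const fun x => Or.inl (hpos x).ne').integral_hasStrictDerivAt
      0 v).hasDerivAt
  have hprod := ((hΘ v).hasDerivAt.rpow_const (p := -β) (Or.inl (hpos v).ne')).mul hG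
  refine hprod.congr_deriv ?_
  have hcancel : Θ v ^ (-β) * Θ v ^ β = 1 := by
    rw [← Real.rpow_add (hpos v), neg_add_cancel, Real.rpow_zero]
  rw [hcancel, Real.rpow_sub (hpos v), Real.rpow_one, poissonIntegrand]
  field_simp [(hpos v).ne']
  ring

theorem contDiff_one_poissonIntegrand (hΘ : ContDiff ℝ 1 Θ) (hpos : ∀ v, 0 < Θ v) :
    ContDiff ℝ 1 (poissonIntegrand Θ β) := by
  obtain ⟨hdiff, hderiv⟩ := contDiff_one_iff_deriv.mp hΘ
  have hg := hasDerivAt_poissonIntegrand (β := β) hdiff hpos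
  have hcont : Continuous (poissonIntegrand Θ β) :=
    continuous_iff_continuousAt.mpr fun v => (hg v).continuousAt
  refine contDiff_one_iff_deriv.mpr ⟨fun v => (hg v).differentiableAt, ?_⟩
  rw [funext fun v => (hg v).deriv]
  exact continuous_const.sub
    (((continuous_const.mul hderiv).div hdiff.continuous fun v => (hpos v).ne').mul hcont)

theorem hasDerivAt_poissonSolution (hΘ : ContDiff ℝ 1 Θ) (hpos : ∀ v, 0 < Θ v) (v : ℝ) :
    HasDerivAt (poissonSolution Θ β) (2 * poissonIntegrand Θ β v) v :=
  ((contDiff_one_poissonIntegrand hΘ hpos).continuous.integral_hasStrictDerivAt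
    0 v).hasDerivAt.const_mul 2

theorem deriv_poissonSolution (hΘ : ContDiff ℝ 1 Θ) (hpos : ∀ v, 0 < Θ v) :
    deriv (poissonSolution Θ β) = fun v => 2 * poissonIntegrand Θ β v :=
  funext fun v => (hasDerivAt_poissonSolution hΘ hpos v).deriv

theorem contDiff_two_poissonSolution (hΘ : ContDiff ℝ 1 Θ) (hpos : ∀ v, 0 < Θ v) :
    ContDiff ℝ 2 (poissonSolution Θ β) := by
  rw [show (2 : WithTop ℕ∞) = 1 + 1 from rfl]
  refine contDiff_succ_iff_deriv.mpr
    ⟨fun v => (hasDerivAt_poissonSolution hΘ hpos v).differentiableAt, by simp, ?_⟩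
  rw [deriv_poissonSolution hΘ hpos]
  exact contDiff_const.mul (contDiff_one_poissonIntegrand hΘ hpos)

end

theorem stmt3_general (β : ℝ)
    (Θ : ℝ → ℝ) (hΘpos : ∀ v, 0 < Θ v) (hΘC1 : ContDiff ℝ 1 Θ) :
    let F : ℝ → ℝ := fun v => (β / 2) * deriv Θ v / Θ v
    let ℓ : ℝ → ℝ := fun v =>
      2 * ∫ u in (0 : ℝ)..v, (Θ u) ^ (-β) * ∫ w in (0 : ℝ)..u, (Θ w) ^ β
    ContDiff ℝ 2 ℓ ∧ ∀ v : ℝ, deriv ℓ v * F v + (1 / 2) * deriv (deriv ℓ) v = 1 := by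
  intro F ℓ
  change ContDiff ℝ 2 (poissonSolution Θ β) ∧
    ∀ v, deriv (poissonSolution Θ β) v * F v + 1 / 2 * deriv (deriv (poissonSolution Θ β)) v = 1
  refine ⟨contDiff_two_poissonSolution hΘC1 hΘpos, fun v => ?_⟩
  have hg' := (hasDerivAt_poissonIntegrand (β := β)
    (hΘC1.differentiable one_ne_zero) hΘpos v).const_mul 2
  rw [deriv_poissonSolution hΘC1 hΘpos, hg'.deriv]
  simp only [F]
  field_simp [(hΘpos v).ne']
  ring

/-- With `F = (β/2) Θ'/Θ` and `ℓ(v) = 2∫_0^v Θ(u)^{-β} (∫_0^u Θ(w)^β dw) du`,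
the function `ℓ` is `C²` and solves the Poisson equation `ℓ' F + ℓ''/2 = 1`. -/
theorem stmt3 (β : ℝ) (hβ1 : 1 < β) (hβ5 : β < 5)
    (Θ : ℝ → ℝ) (hΘpos : ∀ v, 0 < Θ v) (hΘC1 : ContDiff ℝ 1 Θ)
    (hΘeven : ∀ v, Θ (-v) = Θ v)
    (hΘtop : Tendsto (fun v : ℝ => |v| * Θ v) atTop (𝓝 1))
    (hΘbot : Tendsto (fun v : ℝ => |v| * Θ v) atBot (𝓝 1)) :
    let F : ℝ → ℝ := fun v => (β / 2) * deriv Θ v / Θ v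
    let ℓ : ℝ → ℝ := fun v =>
      2 * ∫ u in (0 : ℝ)..v, (Θ u) ^ (-β) * ∫ w in (0 : ℝ)..u, (Θ w) ^ β
    ContDiff ℝ 2 ℓ ∧ ∀ v : ℝ, deriv ℓ v * F v + (1 / 2) * deriv (deriv ℓ) v = 1 :=
  stmt3_general β Θ hΘpos hΘC1
end

section
/- Let Θ : ℝ → (0,∞) be a C¹ even function satisfying lim_{v→±∞} |v|Θ(v) = 1 and let β ∈ (1,5). Define ℓ(v) = 2∫_0^v Θ(u)^{-β} (∫_0^u Θ(w)^β dw) du. Then there exist constants M, M' > 0 such that for all v ∈ ℝ: |v|^{β+1} ≤ M(1 + ℓ(v)) and (ℓ'(v))² ≤ M'(1 + v^{2β}). -/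
open MeasureTheory Filter Topology intervalIntegral Set

set_option maxHeartbeats 1000000

/-- Polynomial bounds for `ℓ` and `ℓ'`: there are `M, M' > 0` with
`|v|^{β+1} ≤ M(1 + ℓ(v))` and `ℓ'(v)² ≤ M'(1 + |v|^{2β})` for all `v`. -/
theorem stmt5 (β : ℝ) (hβ1 : 1 < β) (hβ5 : β < 5)
    (Θ : ℝ → ℝ) (hΘpos : ∀ v, 0 < Θ v) (hΘC1 : ContDiff ℝ 1 Θ)
    (hΘeven : ∀ v, Θ (-v) = Θ v)
    (hΘtop : Tendsto (fun v : ℝ => |v| * Θ v) atTop (𝓝 1))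
    (hΘbot : Tendsto (fun v : ℝ => |v| * Θ v) atBot (𝓝 1)) :
    let ℓ : ℝ → ℝ := fun v =>
      2 * ∫ u in (0 : ℝ)..v, (Θ u) ^ (-β) * ∫ w in (0 : ℝ)..u, (Θ w) ^ β
    ∃ M > 0, ∃ M' > 0, ∀ v : ℝ,
      |v| ^ (β + 1) ≤ M * (1 + ℓ v) ∧ (deriv ℓ v) ^ 2 ≤ M' * (1 + |v| ^ (2 * β)) := by
  intro ℓ
  have hβ0 : (0:ℝ) ≤ β := by linarith
  have hΘc : Continuous Θ := hΘC1.continuous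
  set f : ℝ → ℝ := fun w => Θ w ^ β with hfdef
  have hfeq : ∀ w : ℝ, f w = Θ w ^ β := fun w => rfl
  have hfc : Continuous f := hΘc.rpow_const (fun x => Or.inl (hΘpos x).ne')
  set F : ℝ → ℝ := fun u => ∫ w in (0:ℝ)..u, f w with hFdef
  have hFeq : ∀ u : ℝ, F u = ∫ w in (0:ℝ)..u, f w := fun u => rfl
  have hFd : ∀ u : ℝ, HasDerivAt F (f u) u := fun u =>
    intervalIntegral.integral_hasDerivAt_right ((hfc.intervalIntegrable) 0 u)
      (hfc.stronglyMeasurableAtFilter _ _) hfc.continuousAt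
  have hFc : Continuous F := continuous_iff_continuousAt.mpr fun u => (hFd u).continuousAt
  set g : ℝ → ℝ := fun u => Θ u ^ (-β) * F u with hgdef
  have hgc : Continuous g :=
    (hΘc.rpow_const (fun x => Or.inl (hΘpos x).ne')).mul hFc
  have hgeq : ∀ u : ℝ, g u = Θ u ^ (-β) * F u := fun u => rfl
  have hldef : ∀ v : ℝ, ℓ v = 2 * ∫ u in (0:ℝ)..v, g u := fun v => rfl
  have hld : ∀ v : ℝ, HasDerivAt ℓ (2 * g v) v := by
    intro v
    exact (intervalIntegral.integral_hasDerivAt_right (hgc.intervalIntegrable 0 v)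
      (hgc.stronglyMeasurableAtFilter _ _) hgc.continuousAt).const_mul 2
  have hlderiv : ∀ v : ℝ, deriv ℓ v = 2 * g v := fun v => (hld v).deriv
  -- oddness
  have hfeven : ∀ u, f (-u) = f u := fun u => by simp [hfdef, hΘeven u]
  have hFodd : ∀ u, F (-u) = -F u := by
    intro u
    have h1 : (∫ x in (0:ℝ)..u, f (-x)) = ∫ x in (-u)..(0:ℝ), f x := by
      simpa using intervalIntegral.integral_comp_neg f (a := 0) (b := u)
    simp only [hfeven] at h1
    calc F (-u) = ∫ x in (0:ℝ)..(-u), f x := rfl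
      _ = -∫ x in (-u)..(0:ℝ), f x := by rw [intervalIntegral.integral_symm]
      _ = -∫ x in (0:ℝ)..u, f x := by rw [h1]
      _ = -F u := rfl
  have hgodd : ∀ u, g (-u) = -g u := fun u => by
    simp [hgdef, hΘeven u, hFodd u, mul_comm]
  have hleven : ∀ v : ℝ, ℓ (-v) = ℓ v := by
    intro v
    have h1 : (∫ x in (0:ℝ)..v, g (-x)) = ∫ x in (-v)..(0:ℝ), g x := by
      simpa using intervalIntegral.integral_comp_neg g (a := 0) (b := v)
    simp only [hgodd] at h1
    rw [intervalIntegral.integral_neg] at h1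
    have h2 : (∫ x in (-v)..(0:ℝ), g x) = -∫ x in (0:ℝ)..(-v), g x :=
      intervalIntegral.integral_symm _ _
    rw [hldef, hldef,
      show (∫ u in (0:ℝ)..(-v), g u) = ∫ u in (0:ℝ)..v, g u by linarith]
  clear_value ℓ f F g
  clear hfdef hFdef hgdef hfeven
  -- asymptotic bounds
  have hmem : ∀ᶠ v in atTop, |v| * Θ v ∈ Set.Ioo (1/2 : ℝ) 2 :=
    hΘtop.eventually (Ioo_mem_nhds (by norm_num) (by norm_num))
  obtain ⟨R₀, hR₀⟩ := eventually_atTop.mp hmem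
  obtain ⟨R, hR1, hRR₀⟩ : ∃ R : ℝ, 1 ≤ R ∧ R₀ ≤ R :=
    ⟨max R₀ 1, le_max_right _ _, le_max_left _ _⟩
  have hR0 : (0:ℝ) < R := by linarith
  have hΘabs : ∀ v : ℝ, Θ |v| = Θ v := by
    intro v
    rcases abs_cases v with ⟨h, _⟩ | ⟨h, _⟩
    · rw [h]
    · rw [h, hΘeven]
  have hkey : ∀ v : ℝ, R ≤ |v| → 1/(2*|v|) ≤ Θ v ∧ Θ v ≤ 2/|v| := by
    intro v hv
    have hvpos : (0:ℝ) < |v| := lt_of_lt_of_le hR0 hv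
    have := hR₀ |v| (le_trans hRR₀ hv)
    rw [abs_of_nonneg hvpos.le, hΘabs] at this
    obtain ⟨hlo, hhi⟩ := this
    have hc : |v| * Θ v = Θ v * |v| := mul_comm _ _
    constructor
    · rw [div_le_iff₀ (by positivity)]
      nlinarith
    · rw [le_div_iff₀ hvpos]
      nlinarith
  -- compactness bounds on [-R, R]
  have hKc : IsCompact (Icc (-R) R) := isCompact_Icc
  have hKne : (Icc (-R) R).Nonempty := ⟨0, by constructor <;> linarith⟩
  obtain ⟨x₀, hx₀K, hx₀⟩ := hKc.exists_isMinOn hKne (hΘc.continuousOn)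
  obtain ⟨x₁, hx₁K, hx₁⟩ := hKc.exists_isMaxOn hKne (hΘc.continuousOn)
  obtain ⟨m, hm0, hmle⟩ : ∃ m : ℝ, 0 < m ∧ ∀ v ∈ Icc (-R) R, m ≤ Θ v :=
    ⟨Θ x₀, hΘpos x₀, fun v hv => hx₀ hv⟩
  obtain ⟨A, hA0, hAle⟩ : ∃ A : ℝ, 0 < A ∧ ∀ v ∈ Icc (-R) R, Θ v ≤ A :=
    ⟨Θ x₁, hΘpos x₁, fun v hv => hx₁ hv⟩
  clear hx₀ hx₁ hx₀K hx₁K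
  -- upper bound on F
  have htail0 : (0:ℝ) < 2 ^ β * (R ^ (1 - β) / (β - 1)) :=
    mul_pos (Real.rpow_pos_of_pos two_pos β)
      (div_pos (Real.rpow_pos_of_pos hR0 _) (by linarith))
  obtain ⟨B, hB0, hBdef⟩ : ∃ B : ℝ, 0 < B ∧
      B = A ^ β * R + 2 ^ β * (R ^ (1 - β) / (β - 1)) := by
    refine ⟨_, ?_, rfl⟩
    have h1 := mul_pos (Real.rpow_pos_of_pos hA0 β) hR0
    linarith
  have hfbd : ∀ x : ℝ, x ∈ Icc (-R) R → f x ≤ A ^ β := by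
    intro x hx
    rw [hfeq]
    exact Real.rpow_le_rpow (hΘpos x).le (hAle x hx) hβ0
  have hFubR : ∀ u : ℝ, 0 ≤ u → u ≤ R → F u ≤ A ^ β * R := by
    intro u hu hcase
    have h1 : F u ≤ ∫ w in (0:ℝ)..u, A ^ β := by
      rw [hFeq]
      apply intervalIntegral.integral_mono_on hu (hfc.intervalIntegrable 0 u)
        intervalIntegrable_const
      intro x hx
      exact hfbd x ⟨by linarith [hx.1], by linarith [hx.2]⟩
    rw [intervalIntegral.integral_const, smul_eq_mul, sub_zero] at h1
    have h2 : A ^ β * u ≤ A ^ β * R :=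
      mul_le_mul_of_nonneg_left hcase (Real.rpow_nonneg hA0.le β)
    calc F u ≤ A ^ β * u := by linarith [mul_comm u (A ^ β)]
      _ ≤ A ^ β * R := h2
  have hFsplit : ∀ u : ℝ, F u = F R + ∫ w in R..u, f w := by
    intro u
    rw [hFeq, hFeq]
    exact (intervalIntegral.integral_add_adjacent_intervals
      (hfc.intervalIntegrable 0 R) (hfc.intervalIntegrable R u)).symm
  have hFub : ∀ u : ℝ, 0 ≤ u → F u ≤ B := by
    intro u hu
    by_cases hcase : u ≤ R
    · calc F u ≤ A ^ β * R := hFubR u hu hcase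
        _ ≤ B := by rw [hBdef]; linarith
    · push_neg at hcase
      have hFR : F R ≤ A ^ β * R := hFubR R hR0.le le_rfl
      have hco : ContinuousOn (fun w : ℝ => 2 ^ β * w ^ (-β)) (uIcc R u) := by
        apply ContinuousOn.mul continuousOn_const
        intro w hw
        rw [uIcc_of_le hcase.le] at hw
        exact (Real.continuousAt_rpow_const w (-β)
          (Or.inl (by linarith [hw.1]))).continuousWithinAt
      have htail : (∫ w in R..u, f w) ≤ ∫ w in R..u, 2 ^ β * w ^ (-β) := by
        apply intervalIntegral.integral_mono_on hcase.le (hfc.intervalIntegrable R u)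
          hco.intervalIntegrable
        intro x hx
        have hx0 : 0 < x := lt_of_lt_of_le hR0 hx.1
        have hΘx : Θ x ≤ 2 / x := by
          have := (hkey x (by rw [abs_of_pos hx0]; exact hx.1)).2
          rwa [abs_of_pos hx0] at this
        rw [hfeq]
        calc Θ x ^ β ≤ (2 / x) ^ β := Real.rpow_le_rpow (hΘpos x).le hΘx hβ0
          _ = 2 ^ β * x ^ (-β) := by
            rw [Real.div_rpow two_pos.le hx0.le, Real.rpow_neg hx0.le, div_eq_mul_inv]
      have hcomp : (∫ w in R..u, 2 ^ β * w ^ (-β)) ≤ 2 ^ β * (R ^ (1 - β) / (β - 1)) := by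
        rw [intervalIntegral.integral_const_mul]
        have hval : (∫ w in R..u, w ^ (-β)) = (u ^ (-β + 1) - R ^ (-β + 1)) / (-β + 1) := by
          apply integral_rpow
          refine Or.inr ⟨by intro h; linarith [neg_eq_iff_eq_neg.mp h], ?_⟩
          rw [uIcc_of_le hcase.le]
          intro h0
          linarith [h0.1]
        rw [hval]
        apply mul_le_mul_of_nonneg_left _ (Real.rpow_nonneg two_pos.le β)
        have hu1 : (0:ℝ) ≤ u ^ (-β + 1) := Real.rpow_nonneg (by linarith) _
        have hR1' : R ^ (-β + 1) = R ^ (1 - β) := by ring_nf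
        rw [hR1']
        have heq : (u ^ (-β + 1) - R ^ (1 - β)) / (-β + 1)
            = (R ^ (1 - β) - u ^ (-β + 1)) / (β - 1) := by
          rw [div_eq_div_iff (by linarith) (by linarith)]; ring
        rw [heq, div_le_div_iff₀ (by linarith) (by linarith)]
        nlinarith
      rw [hFsplit u, hBdef]
      linarith
  have hfnn : ∀ w : ℝ, 0 ≤ f w := fun w => by rw [hfeq]; exact Real.rpow_nonneg (hΘpos w).le β
  have hFnn : ∀ u : ℝ, 0 ≤ u → 0 ≤ F u := by
    intro u hu
    rw [hFeq]
    exact intervalIntegral.integral_nonneg hu (fun w _ => hfnn w)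
  have hFabs : ∀ u : ℝ, |F u| ≤ B := by
    intro u
    rcases le_or_gt 0 u with hu | hu
    · rw [abs_of_nonneg (hFnn u hu)]; exact hFub u hu
    · have h2 := hFodd (-u)
      rw [neg_neg] at h2
      have h1 : F u = -F (-u) := by linarith
      rw [h1, abs_neg, abs_of_nonneg (hFnn (-u) (by linarith))]
      exact hFub (-u) (by linarith)
  -- lower bound on F R
  have hFRlb : m ^ β * R ≤ F R := by
    have h1 : (∫ w in (0:ℝ)..R, (m:ℝ) ^ β) ≤ ∫ w in (0:ℝ)..R, f w := by
      apply intervalIntegral.integral_mono_on hR0.le intervalIntegrable_const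
        (hfc.intervalIntegrable 0 R)
      intro x hx
      rw [hfeq]
      exact Real.rpow_le_rpow hm0.le (hmle x ⟨by linarith [hx.1], by linarith [hx.2]⟩) hβ0
    rw [intervalIntegral.integral_const, smul_eq_mul, sub_zero] at h1
    rw [hFeq]
    linarith [mul_comm R ((m:ℝ) ^ β)]
  have hFR0 : 0 < F R := lt_of_lt_of_le (by positivity) hFRlb
  have hFmono : ∀ u : ℝ, R ≤ u → F R ≤ F u := by
    intro u hu
    have h1 : 0 ≤ ∫ w in R..u, f w :=
      intervalIntegral.integral_nonneg hu (fun w _ => hfnn w)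
    rw [hFsplit u]
    linarith
  -- ℓ nonneg
  have hgnn : ∀ u : ℝ, 0 ≤ u → 0 ≤ g u := by
    intro u hu
    rw [hgeq]
    exact mul_nonneg (Real.rpow_nonneg (hΘpos u).le _) (hFnn u hu)
  have hlnn : ∀ v : ℝ, 0 ≤ v → 0 ≤ ℓ v := by
    intro v hv
    rw [hldef]
    have : 0 ≤ ∫ u in (0:ℝ)..v, g u :=
      intervalIntegral.integral_nonneg hv (fun u hu => hgnn u hu.1)
    linarith
  -- pointwise bound on Θ ^ (-β)
  have hΘinv : ∀ v : ℝ, Θ v ^ (-β) ≤ m ^ (-β) + 2 ^ β * |v| ^ β := by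
    intro v
    rcases le_or_gt (|v|) R with hv | hv
    · have hmem' : v ∈ Icc (-R) R := by
        rcases abs_le.mp hv with ⟨h1, h2⟩; exact ⟨h1, h2⟩
      have h1 : Θ v ^ (-β) ≤ m ^ (-β) :=
        Real.rpow_le_rpow_of_nonpos hm0 (hmle v hmem') (by linarith)
      have h2 : (0:ℝ) ≤ 2 ^ β * |v| ^ β :=
        mul_nonneg (Real.rpow_nonneg two_pos.le _) (Real.rpow_nonneg (abs_nonneg v) _)
      linarith
    · have hvpos : (0:ℝ) < |v| := lt_trans hR0 hv
      have h2 := (hkey v hv.le).1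
      have h1 : Θ v ^ (-β) ≤ (1/(2*|v|)) ^ (-β) :=
        Real.rpow_le_rpow_of_nonpos (by positivity) h2 (by linarith)
      have heq : (1/(2*|v|)) ^ (-β) = 2 ^ β * |v| ^ β := by
        rw [one_div, Real.inv_rpow (by positivity), ← Real.rpow_neg (by positivity),
          neg_neg, Real.mul_rpow two_pos.le (abs_nonneg v)]
      have h3 : (0:ℝ) ≤ m ^ (-β) := Real.rpow_nonneg hm0.le _
      linarith [heq ▸ h1]
  -- derivative bound
  obtain ⟨M', hM'0, hM'def⟩ : ∃ M' : ℝ, 0 < M' ∧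
      M' = 8 * B ^ 2 * ((m ^ (-β)) ^ 2 + (2 ^ β) ^ 2) + 1 := by
    refine ⟨_, ?_, rfl⟩
    positivity
  have hder : ∀ v : ℝ, (deriv ℓ v) ^ 2 ≤ M' * (1 + |v| ^ (2 * β)) := by
    intro v
    obtain ⟨a, ha0, hadef⟩ : ∃ a : ℝ, 0 ≤ a ∧ a = m ^ (-β) :=
      ⟨_, Real.rpow_nonneg hm0.le _, rfl⟩
    obtain ⟨b, hb0, hbdef⟩ : ∃ b : ℝ, 0 ≤ b ∧ b = (2:ℝ) ^ β :=
      ⟨_, Real.rpow_nonneg two_pos.le _, rfl⟩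
    obtain ⟨t, ht0, htdef⟩ : ∃ t : ℝ, 0 ≤ t ∧ t = |v| ^ β :=
      ⟨_, Real.rpow_nonneg (abs_nonneg v) _, rfl⟩
    have ht2 : |v| ^ (2 * β) = t ^ 2 := by
      rw [two_mul, Real.rpow_add_of_nonneg (abs_nonneg v) hβ0 hβ0, htdef, sq]
    have hΘv : Θ v ^ (-β) ≤ a + b * t := by
      rw [hadef, hbdef, htdef]; exact hΘinv v
    have habs : |deriv ℓ v| ≤ 2 * B * (a + b * t) := by
      rw [hlderiv v, hgeq]
      rw [abs_mul, abs_mul, abs_two, abs_of_nonneg (Real.rpow_nonneg (hΘpos v).le _)]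
      have h1 : Θ v ^ (-β) * |F v| ≤ (a + b * t) * B := by
        apply mul_le_mul hΘv (hFabs v) (abs_nonneg _)
        linarith [mul_nonneg hb0 ht0]
      linarith [mul_comm (a + b * t) B]
    obtain ⟨hd1, hd2⟩ := abs_le.mp habs
    rw [ht2]
    have h2 : (2 * B * (a + b * t)) ^ 2 ≤ M' * (1 + t ^ 2) := by
      rw [hM'def, ← hadef, ← hbdef]
      nlinarith [mul_nonneg (sq_nonneg B) (sq_nonneg (a - b * t)),
        mul_nonneg (sq_nonneg B) (sq_nonneg (a * t - b)), sq_nonneg t,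
        mul_nonneg (mul_nonneg (sq_nonneg B) (mul_nonneg ha0 hb0)) ht0]
    exact le_trans (sq_le_sq' hd1 hd2) h2
  -- lower bound
  obtain ⟨D, hD0, hDdef⟩ : ∃ D : ℝ, 0 < D ∧ D = 2 ^ β * (β + 1) / (2 * F R) := by
    refine ⟨_, ?_, rfl⟩
    exact div_pos (mul_pos (Real.rpow_pos_of_pos two_pos _) (by linarith)) (by linarith)
  obtain ⟨M, hM0, hMdef⟩ : ∃ M : ℝ, 0 < M ∧ M = R ^ (β + 1) + D + 1 := by
    refine ⟨_, ?_, rfl⟩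
    have : (0:ℝ) < R ^ (β + 1) := Real.rpow_pos_of_pos hR0 _
    linarith
  have hpowc : Continuous (fun u : ℝ => u ^ β) :=
    continuous_id.rpow_const (fun x => Or.inr hβ0)
  have hlow : ∀ w : ℝ, R ≤ w →
      2 * (F R / 2 ^ β) * ((w ^ (β + 1) - R ^ (β + 1)) / (β + 1)) ≤ ℓ w := by
    intro w hw
    have hsplit : (∫ u in (0:ℝ)..w, g u) =
        (∫ u in (0:ℝ)..R, g u) + ∫ u in R..w, g u :=
      (intervalIntegral.integral_add_adjacent_intervals
        (hgc.intervalIntegrable 0 R) (hgc.intervalIntegrable R w)).symm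
    have h0R : 0 ≤ ∫ u in (0:ℝ)..R, g u :=
      intervalIntegral.integral_nonneg hR0.le (fun u hu => hgnn u hu.1)
    have hmono : (∫ u in R..w, (fun u : ℝ => u ^ β * (F R / 2 ^ β)) u)
        ≤ ∫ u in R..w, g u := by
      apply intervalIntegral.integral_mono_on hw
        ((hpowc.mul continuous_const).intervalIntegrable R w)
        (hgc.intervalIntegrable R w)
      intro u hu
      have hu0 : 0 < u := lt_of_lt_of_le hR0 hu.1
      have hΘu : Θ u ≤ 2 / u := by
        have := (hkey u (by rw [abs_of_pos hu0]; exact hu.1)).2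
        rwa [abs_of_pos hu0] at this
      have h1 : (2 / u) ^ (-β) ≤ Θ u ^ (-β) :=
        Real.rpow_le_rpow_of_nonpos (hΘpos u) hΘu (by linarith)
      have heq : (2 / u) ^ (-β) = u ^ β / 2 ^ β := by
        rw [Real.rpow_neg (by positivity), Real.div_rpow two_pos.le hu0.le, inv_div]
      have h2 : F R ≤ F u := hFmono u hu.1
      rw [hgeq]
      calc u ^ β * (F R / 2 ^ β) = (u ^ β / 2 ^ β) * F R := by ring
        _ ≤ Θ u ^ (-β) * F u := by
            apply mul_le_mul (heq ▸ h1) h2 hFR0.le (Real.rpow_nonneg (hΘpos u).le _)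
    have hcalc : (∫ u in R..w, (fun u : ℝ => u ^ β * (F R / 2 ^ β)) u)
        = ((w ^ (β + 1) - R ^ (β + 1)) / (β + 1)) * (F R / 2 ^ β) := by
      rw [intervalIntegral.integral_mul_const]
      congr 1
      exact integral_rpow (Or.inl (by linarith))
    rw [hldef, hsplit]
    rw [hcalc] at hmono
    linarith
  -- conclusion
  refine ⟨M, hM0, M', hM'0, fun v => ?_⟩
  refine ⟨?_, hder v⟩
  have hlabs : ℓ |v| = ℓ v := by
    rcases abs_cases v with ⟨h, _⟩ | ⟨h, _⟩
    · rw [h]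
    · rw [h, hleven]
  have hlnn' : 0 ≤ ℓ v := by rw [← hlabs]; exact hlnn _ (abs_nonneg v)
  rcases le_or_gt (|v|) R with hv | hv
  · have h1 : |v| ^ (β + 1) ≤ R ^ (β + 1) :=
      Real.rpow_le_rpow (abs_nonneg v) hv (by linarith)
    nlinarith [Real.rpow_pos_of_pos hR0 (β + 1)]
  · have h2 := hlow (|v|) hv.le
    rw [hlabs] at h2
    have hkey2 : |v| ^ (β + 1) - R ^ (β + 1) ≤ D * ℓ v := by
      have h3 := mul_le_mul_of_nonneg_left h2 hD0.le
      have h4 : D * (2 * (F R / 2 ^ β) * ((|v| ^ (β + 1) - R ^ (β + 1)) / (β + 1)))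
          = |v| ^ (β + 1) - R ^ (β + 1) := by
        rw [hDdef]
        have hne1 : (2:ℝ) ^ β ≠ 0 := (Real.rpow_pos_of_pos two_pos β).ne'
        have hne2 : F R ≠ 0 := hFR0.ne'
        have hne3 : β + 1 ≠ 0 := by linarith
        field_simp
      linarith [h4 ▸ h3]
    have h5 : D * ℓ v ≤ M * ℓ v := by
      apply mul_le_mul_of_nonneg_right _ hlnn'
      rw [hMdef]
      have : (0:ℝ) < R ^ (β + 1) := Real.rpow_pos_of_pos hR0 _
      linarith
    have h6 : R ^ (β + 1) ≤ M := by
      rw [hMdef]; linarith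
    nlinarith
end

section
/- Let Θ : ℝ → (0,∞) be a C¹ even function satisfying lim_{v→±∞} |v|Θ(v) = 1 and let β ∈ (1,5). Define s(v) = ∫_0^v Θ(u)^{-β} du, which is a strictly increasing bijection of ℝ, let s^{-1} be its inverse and ψ = s' ∘ s^{-1}. Then lim_{w→+∞} s^{-1}(w)/w^{1/(β+1)} = (β+1)^{1/(β+1)} and lim_{w→+∞} ψ(w)/w^{β/(β+1)} = (β+1)^{β/(β+1)}. -/
/-!
Since `u Θ(u) → 1`, the integrand `Θ(u)^{-β}` of `s` is asymptotic to `u^β`, and integrating an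
asymptotic equivalence whose integral diverges gives `s(v) ~ v^{β+1}/(β+1)`. Evaluating this at
`v = s⁻¹(w) → ∞` yields `w ~ s⁻¹(w)^{β+1}/(β+1)`, which is the first limit; the second follows
because `ψ(w) = Θ(s⁻¹(w))^{-β} ~ s⁻¹(w)^β`.
-/

open MeasureTheory Filter Topology intervalIntegral Asymptotics

theorem Asymptotics.IsLittleO.intervalIntegral_atTop {E : Type*} [NormedAddCommGroup E]
    [NormedSpace ℝ E] {f : ℝ → E} {g : ℝ → ℝ} {a : ℝ}
    (hf : ∀ b, IntervalIntegrable f volume a b) (hg : ∀ b, IntervalIntegrable g volume a b)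
    (hfg : f =o[atTop] g) (hg_nonneg : ∀ᶠ u in atTop, 0 ≤ g u)
    (hG : Tendsto (fun v => ∫ u in a..v, g u) atTop atTop) :
    (fun v => ∫ u in a..v, f u) =o[atTop] fun v => ∫ u in a..v, g u := by
  refine isLittleO_iff.2 fun c hc => ?_
  obtain ⟨M, hM⟩ := eventually_atTop.1
    ((isLittleO_iff.1 hfg (half_pos hc)).and hg_nonneg)
  -- beyond `M` the tail is at most `c/2 · ∫ g`; the head up to `M` is a constant `C`,
  -- eventually dominated by the divergent `c/2 · ∫ g` as well
  set C := ‖∫ u in a..M, f u‖ - c / 2 * ∫ u in a..M, g u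
  filter_upwards [eventually_ge_atTop M, hG.eventually_ge_atTop 0,
    hG.eventually_ge_atTop (C / (c / 2))] with v hMv hGv hCv
  have htail : ‖∫ u in M..v, f u‖ ≤ c / 2 * ∫ u in M..v, g u := by
    rw [← intervalIntegral.integral_const_mul]
    refine norm_integral_le_of_norm_le hMv (ae_of_all _ fun u hu => ?_)
      (((hg M).symm.trans (hg v)).const_mul (c / 2))
    have := hM u hu.1.le
    simpa [Real.norm_of_nonneg this.2] using this.1
  calc ‖∫ u in a..v, f u‖
      = ‖(∫ u in a..M, f u) + ∫ u in M..v, f u‖ := by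
        rw [integral_add_adjacent_intervals (hf M) ((hf M).symm.trans (hf v))]
    _ ≤ ‖∫ u in a..M, f u‖ + c / 2 * ∫ u in M..v, g u := (norm_add_le _ _).trans (by gcongr)
    _ = C + c / 2 * ∫ u in a..v, g u := by
        rw [← integral_interval_sub_left (hg v) (hg M)]; ring
    _ ≤ c * ‖∫ u in a..v, g u‖ := by
        rw [div_le_iff₀ (half_pos hc)] at hCv
        rw [Real.norm_of_nonneg hGv]
        linarith

theorem Asymptotics.IsEquivalent.intervalIntegral_atTop {f g : ℝ → ℝ} {a : ℝ}
    (hf : ∀ b, IntervalIntegrable f volume a b) (hg : ∀ b, IntervalIntegrable g volume a b)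
    (hfg : f ~[atTop] g) (hg_nonneg : ∀ᶠ u in atTop, 0 ≤ g u)
    (hG : Tendsto (fun v => ∫ u in a..v, g u) atTop atTop) :
    (fun v => ∫ u in a..v, f u) ~[atTop] fun v => ∫ u in a..v, g u := by
  have := hfg.isLittleO.intervalIntegral_atTop (fun b => (hf b).sub (hg b)) hg hg_nonneg hG
  refine this.congr_left fun v => ?_
  simp only [Pi.sub_apply, integral_sub (hf v) (hg v)]

theorem strictMono_intervalIntegral_of_pos {f : ℝ → ℝ} {a : ℝ}
    (hf : ∀ b c, IntervalIntegrable f volume b c) (hpos : ∀ u, 0 < f u) :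
    StrictMono fun v => ∫ u in a..v, f u := by
  intro v w hvw
  have := intervalIntegral_pos_of_pos (hf v w) hpos hvw
  rw [← integral_interval_sub_left (hf a w) (hf a v)] at this
  simpa only [sub_pos] using this

theorem Asymptotics.IsEquivalent.tendsto_div_of_eq_const_mul {α : Type*} {l : Filter α}
    {u v : α → ℝ} {c : ℝ} (h : u ~[l] fun x => c * v x) (hv : ∀ᶠ x in l, v x ≠ 0) :
    Tendsto (fun x => u x / v x) l (𝓝 c) := by
  refine IsEquivalent.tendsto_const ((h.div (IsEquivalent.refl (u := v))).congr_right ?_)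
  filter_upwards [hv] with x hx
  simp [hx]

theorem StrictMono.tendsto_atTop_of_rightInverse {s sInv : ℝ → ℝ} (hs : StrictMono s)
    (hright : ∀ w, s (sInv w) = w) : Tendsto sInv atTop atTop := by
  refine Filter.tendsto_atTop.2 fun b => ?_
  filter_upwards [eventually_ge_atTop (s b)] with w hw
  exact hs.le_iff_le.1 (by rwa [hright])

theorem tendsto_div_rpow_of_rightInverse {s sInv : ℝ → ℝ} {p c : ℝ} (hp : 0 < p) (hc : 0 < c)
    (hs : Tendsto (fun v => s v / v ^ p) atTop (𝓝 c)) (hsInv : Tendsto sInv atTop atTop)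
    (hright : ∀ w, s (sInv w) = w) :
    Tendsto (fun w => sInv w / w ^ (1 / p)) atTop (𝓝 (c⁻¹ ^ (1 / p))) := by
  have hw : Tendsto (fun w => (w / sInv w ^ p) ^ (1 / p)) atTop (𝓝 (c ^ (1 / p))) := by
    refine (hs.comp hsInv).rpow_const (Or.inl hc.ne') |>.congr fun w => ?_
    simp only [Function.comp_apply, hright]
  rw [Real.inv_rpow hc.le]
  refine (hw.inv₀ (Real.rpow_pos_of_pos hc _).ne').congr' ?_
  filter_upwards [hsInv.eventually_gt_atTop 0, eventually_ge_atTop 0] with w hv hw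
  rw [Real.div_rpow hw (Real.rpow_nonneg hv.le p), ← Real.rpow_mul hv.le, mul_one_div_cancel hp.ne',
    Real.rpow_one, inv_div]

section Scale

variable {β : ℝ} {Θ : ℝ → ℝ}

theorem isEquivalent_rpow_neg_of_tendsto_abs_mul (hΘpos : ∀ v, 0 < Θ v)
    (hΘtop : Tendsto (fun v : ℝ => |v| * Θ v) atTop (𝓝 1)) :
    (fun u => Θ u ^ (-β)) ~[atTop] fun u => u ^ β := by
  refine isEquivalent_of_tendsto_one ?_
  have := hΘtop.rpow_const (p := -β) (Or.inl one_ne_zero)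
  rw [Real.one_rpow] at this
  refine this.congr' ?_
  filter_upwards [eventually_gt_atTop 0] with u hu
  rw [abs_of_pos hu, Real.mul_rpow hu.le (hΘpos u).le, Real.rpow_neg hu.le, Pi.div_apply]
  field_simp

theorem isEquivalent_integral_rpow_neg (hβ : -1 < β) (hΘpos : ∀ v, 0 < Θ v) (hΘc : Continuous Θ)
    (hΘtop : Tendsto (fun v : ℝ => |v| * Θ v) atTop (𝓝 1)) :
    (fun v => ∫ u in (0 : ℝ)..v, Θ u ^ (-β)) ~[atTop] fun v => (β + 1)⁻¹ * v ^ (β + 1) := by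
  have hβ1 : 0 < β + 1 := by linarith
  have hint : ∀ v, ∫ u in (0 : ℝ)..v, u ^ β = (β + 1)⁻¹ * v ^ (β + 1) := fun v => by
    rw [integral_rpow (Or.inl hβ), Real.zero_rpow hβ1.ne', sub_zero, div_eq_inv_mul]
  have hequiv := (isEquivalent_rpow_neg_of_tendsto_abs_mul hΘpos hΘtop).intervalIntegral_atTop
    (fun b => (hΘc.rpow_const fun x => Or.inl (hΘpos x).ne').intervalIntegrable 0 b)
    (fun b => intervalIntegrable_rpow' hβ) ((eventually_ge_atTop 0).mono fun u hu => by positivity)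
    (by simpa only [hint] using (tendsto_rpow_atTop hβ1).const_mul_atTop (inv_pos.2 hβ1))
  simpa only [hint] using hequiv

end Scale

theorem stmt7_general (β : ℝ) (hβ1 : 1 < β)
    (Θ : ℝ → ℝ) (hΘpos : ∀ v, 0 < Θ v) (hΘC1 : ContDiff ℝ 1 Θ)
    (hΘtop : Tendsto (fun v : ℝ => |v| * Θ v) atTop (𝓝 1))
    (s : ℝ → ℝ) (hs : ∀ v, s v = ∫ u in (0 : ℝ)..v, (Θ u) ^ (-β))
    (sInv : ℝ → ℝ) (hright : ∀ w, s (sInv w) = w) :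
    let ψ : ℝ → ℝ := fun w => (Θ (sInv w)) ^ (-β)
    Tendsto (fun w : ℝ => sInv w / w ^ ((1 : ℝ) / (β + 1))) atTop
      (𝓝 ((β + 1) ^ ((1 : ℝ) / (β + 1)))) ∧
    Tendsto (fun w : ℝ => ψ w / w ^ (β / (β + 1))) atTop
      (𝓝 ((β + 1) ^ (β / (β + 1)))) := by
  intro ψ
  have hp : 0 < β + 1 := by linarith
  have hs_eq : s = fun v => ∫ u in (0 : ℝ)..v, Θ u ^ (-β) := funext hs
  have hΘβ : Continuous fun u => Θ u ^ (-β) :=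
    hΘC1.continuous.rpow_const fun u => Or.inl (hΘpos u).ne'
  have hmono : StrictMono s := hs_eq ▸ strictMono_intervalIntegral_of_pos
    (fun b c => hΘβ.intervalIntegrable b c) fun u => Real.rpow_pos_of_pos (hΘpos u) _
  have hsInv : Tendsto sInv atTop atTop := hmono.tendsto_atTop_of_rightInverse hright
  have hs_div : Tendsto (fun v => s v / v ^ (β + 1)) atTop (𝓝 (β + 1)⁻¹) :=
    (hs_eq ▸ isEquivalent_integral_rpow_neg (by linarith) hΘpos hΘC1.continuous hΘtop)
      |>.tendsto_div_of_eq_const_mul <|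
        (eventually_gt_atTop 0).mono fun v hv => (Real.rpow_pos_of_pos hv _).ne'
  have hsInv_div := tendsto_div_rpow_of_rightInverse hp (inv_pos.2 hp) hs_div hsInv hright
  rw [inv_inv] at hsInv_div
  refine ⟨hsInv_div, ?_⟩
  have hψ : (fun w => ψ w / w ^ (β / (β + 1))) ~[atTop]
      fun w => (sInv w / w ^ (1 / (β + 1))) ^ β := by
    refine (((isEquivalent_rpow_neg_of_tendsto_abs_mul hΘpos hΘtop).comp_tendsto hsInv).div
      (IsEquivalent.refl (u := fun w : ℝ => w ^ (β / (β + 1))))).congr_right ?_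
    filter_upwards [hsInv.eventually_ge_atTop 0, eventually_ge_atTop 0] with w hv hw
    simp only [Pi.div_apply, Function.comp_apply]
    rw [Real.div_rpow hv (Real.rpow_nonneg hw _), ← Real.rpow_mul hw, one_div_mul_eq_div]
  have hlimit : (β + 1) ^ (β / (β + 1)) = ((β + 1) ^ (1 / (β + 1))) ^ β := by
    rw [← Real.rpow_mul hp.le, one_div_mul_eq_div]
  rw [hψ.tendsto_nhds_iff, hlimit]
  exact hsInv_div.rpow_const (Or.inr (by linarith))

/-- Asymptotics of the inverse scale function `s⁻¹` and of `ψ = s' ∘ s⁻¹`: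
`s⁻¹(w)/w^{1/(β+1)} → (β+1)^{1/(β+1)}` and `ψ(w)/w^{β/(β+1)} → (β+1)^{β/(β+1)}`
as `w → +∞`. Here `s'(v) = Θ(v)^{-β}`. -/
theorem stmt7 (β : ℝ) (hβ1 : 1 < β) (hβ5 : β < 5)
    (Θ : ℝ → ℝ) (hΘpos : ∀ v, 0 < Θ v) (hΘC1 : ContDiff ℝ 1 Θ)
    (hΘeven : ∀ v, Θ (-v) = Θ v)
    (hΘtop : Tendsto (fun v : ℝ => |v| * Θ v) atTop (𝓝 1))
    (hΘbot : Tendsto (fun v : ℝ => |v| * Θ v) atBot (𝓝 1))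
    (s : ℝ → ℝ) (hs : ∀ v, s v = ∫ u in (0 : ℝ)..v, (Θ u) ^ (-β))
    (sInv : ℝ → ℝ) (hleft : ∀ v, sInv (s v) = v) (hright : ∀ w, s (sInv w) = w) :
    let ψ : ℝ → ℝ := fun w => (Θ (sInv w)) ^ (-β)
    Tendsto (fun w : ℝ => sInv w / w ^ ((1 : ℝ) / (β + 1))) atTop
      (𝓝 ((β + 1) ^ ((1 : ℝ) / (β + 1)))) ∧
    Tendsto (fun w : ℝ => ψ w / w ^ (β / (β + 1))) atTop
      (𝓝 ((β + 1) ^ (β / (β + 1)))) :=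
  stmt7_general β hβ1 Θ hΘpos hΘC1 hΘtop s hs sInv hright
end

section
/- Let Θ : ℝ → (0,∞) be a C¹ even function satisfying lim_{v→±∞} |v|Θ(v) = 1 and let β ∈ (1,5). Define s(v) = ∫_0^v Θ(u)^{-β} du, let s^{-1} be its inverse, ψ = s' ∘ s^{-1}, and φ(v) = s^{-1}(v)/ψ(v)². Then there exists a constant C > 0 such that for every v > 0, 0 < φ(v) ≤ C v^{(1-2β)/(β+1)}. -/
/-!
Substituting `v = s x` turns `φ v` into `x Θ(x)^{2β}`, so the claim is that
`x Θ(x)^{2β} s(x)^γ` with `γ = (2β-1)/(β+1)` is bounded for `x > 0`. This function is continuous on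
`[0, ∞)`, and at infinity `Θ(x) = O(1/x)` and `Θ(x)^{-β} = O(x^β)`, hence `s(x) = O(x^{β+1})`;
the exponents then cancel: `1 - 2β + (β+1)γ = 0`.
-/

open MeasureTheory Filter Topology intervalIntegral Asymptotics Set

theorem isBigO_inv_of_tendsto_abs_mul {Θ : ℝ → ℝ} {L : ℝ}
    (h : Tendsto (fun v => |v| * Θ v) atTop (𝓝 L)) : Θ =O[atTop] fun v => v⁻¹ := by
  have hΘ : Θ =ᶠ[atTop] fun v => (|v| * Θ v) * v⁻¹ := by
    filter_upwards [eventually_gt_atTop 0] with v hv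
    rw [abs_of_pos hv]
    field_simp
  simpa using hΘ.trans_isBigO ((h.isBigO_one ℝ).mul (isBigO_refl (fun v : ℝ => v⁻¹) atTop))

theorem inv_isBigO_of_tendsto_abs_mul {Θ : ℝ → ℝ} {L : ℝ} (hL : L ≠ 0)
    (h : Tendsto (fun v => |v| * Θ v) atTop (𝓝 L)) :
    (fun v => (Θ v)⁻¹) =O[atTop] fun v => v := by
  have hΘ : (fun v => (Θ v)⁻¹) =ᶠ[atTop] fun v => (|v| * Θ v)⁻¹ * v := by
    filter_upwards [eventually_gt_atTop 0] with v hv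
    rw [abs_of_pos hv, mul_inv, mul_comm v⁻¹, mul_assoc, inv_mul_cancel₀ hv.ne', mul_one]
  simpa using
    hΘ.trans_isBigO (((h.inv₀ hL).isBigO_one ℝ).mul (isBigO_refl (fun v : ℝ => v) atTop))

theorem integral_isBigO_rpow_add_one {f : ℝ → ℝ} {β : ℝ} (hβ : 0 ≤ β) (hf : Continuous f)
    (hfO : f =O[atTop] fun x => x ^ β) :
    (fun x => ∫ u in (0 : ℝ)..x, f u) =O[atTop] fun x => x ^ (β + 1) := by
  obtain ⟨c, hc, hfc⟩ := hfO.exists_nonneg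
  obtain ⟨M, hM⟩ := (hfc.bound.and (eventually_ge_atTop 1)).exists_forall_of_atTop
  set K := ‖∫ u in (0 : ℝ)..M, f u‖
  refine IsBigO.of_bound (K + c) ?_
  filter_upwards [eventually_ge_atTop M, eventually_ge_atTop 1] with x hxM hx1
  have hx0 : 0 ≤ x := by linarith
  have hfx : ∀ u ∈ uIoc M x, ‖f u‖ ≤ c * x ^ β := fun u hu => by
    have hu : M ≤ u ∧ u ≤ x := ⟨(uIoc_of_le hxM ▸ hu).1.le, (uIoc_of_le hxM ▸ hu).2⟩
    calc ‖f u‖ ≤ c * ‖u ^ β‖ := (hM u hu.1).1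
      _ ≤ c * x ^ β := by
        have hu0 : 0 ≤ u := by linarith [(hM u hu.1).2]
        rw [Real.norm_of_nonneg (Real.rpow_nonneg hu0 _)]
        gcongr
        exact hu.2
  have hint : ∫ u in (0 : ℝ)..x, f u = (∫ u in (0 : ℝ)..M, f u) + ∫ u in M..x, f u :=
    (integral_add_adjacent_intervals (hf.intervalIntegrable _ _)
      (hf.intervalIntegrable _ _)).symm
  have hone : 1 ≤ x ^ (β + 1) := Real.one_le_rpow hx1 (by linarith)
  have hxβ : x ^ β * x = x ^ (β + 1) := (Real.rpow_add_one (by linarith) β).symm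
  rw [Real.norm_of_nonneg (Real.rpow_nonneg hx0 _), hint]
  calc ‖(∫ u in (0 : ℝ)..M, f u) + ∫ u in M..x, f u‖
      ≤ K + c * x ^ β * |x - M| :=
        (norm_add_le _ _).trans (by gcongr; exact norm_integral_le_of_norm_le_const hfx)
    _ ≤ K * x ^ (β + 1) + c * x ^ (β + 1) := by
      have hK : K ≤ K * x ^ (β + 1) := le_mul_of_one_le_right (norm_nonneg _) hone
      have hc : c * x ^ β * |x - M| ≤ c * x ^ (β + 1) := by
        rw [abs_of_nonneg (by linarith), ← hxβ, mul_assoc]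
        gcongr
        linarith [(hM M le_rfl).2]
      linarith
    _ = (K + c) * x ^ (β + 1) := by ring

theorem exists_forall_norm_le_of_isBigO_one {g : ℝ → ℝ} (hg : Continuous g)
    (hgO : g =O[atTop] fun _ => (1 : ℝ)) (a : ℝ) : ∃ C, ∀ x, a ≤ x → ‖g x‖ ≤ C := by
  obtain ⟨c, hc⟩ := hgO.bound
  obtain ⟨M, hM⟩ := hc.exists_forall_of_atTop
  obtain ⟨C, hC⟩ :=
    (isCompact_Icc (a := a) (b := M)).exists_bound_of_continuousOn hg.continuousOn
  refine ⟨max C c, fun x hx => ?_⟩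
  rcases le_total x M with hxM | hMx
  · exact (hC x ⟨hx, hxM⟩).trans (le_max_left _ _)
  · simpa using (hM x hMx).trans (by simp : c * ‖(1 : ℝ)‖ ≤ max C c)

theorem isBigO_one_mul_rpow_mul_integral_rpow {Θ : ℝ → ℝ} {β L : ℝ} (hβ : 1 / 2 ≤ β)
    (hL : L ≠ 0) (hΘpos : ∀ v, 0 < Θ v) (hΘ : Continuous Θ)
    (h : Tendsto (fun v => |v| * Θ v) atTop (𝓝 L)) :
    (fun x => x * Θ x ^ (2 * β) * (∫ u in (0 : ℝ)..x, Θ u ^ (-β)) ^ ((2 * β - 1) / (β + 1)))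
      =O[atTop] fun _ => (1 : ℝ) := by
  set γ := (2 * β - 1) / (β + 1) with hγ
  have hβγ : (β + 1) * γ = 2 * β - 1 := by rw [hγ]; field_simp
  have hinteg : (fun u => Θ u ^ (-β)) =O[atTop] fun u => u ^ β := by
    have hrw : (fun u => Θ u ^ (-β)) = fun u => (Θ u)⁻¹ ^ β := funext fun u => by
      rw [Real.rpow_neg (hΘpos u).le, Real.inv_rpow (hΘpos u).le]
    rw [hrw]
    exact (inv_isBigO_of_tendsto_abs_mul hL h).rpow (by linarith) (eventually_ge_atTop 0)
  have hΘO : (fun x => Θ x ^ (2 * β)) =O[atTop] fun x => x⁻¹ ^ (2 * β) :=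
    (isBigO_inv_of_tendsto_abs_mul h).rpow (by linarith)
      ((eventually_ge_atTop 0).mono fun x hx => inv_nonneg.2 hx)
  have hsO := (integral_isBigO_rpow_add_one (by linarith)
    (hΘ.rpow_const fun u => Or.inl (hΘpos u).ne') hinteg).rpow (r := γ)
    (div_nonneg (by linarith) (by linarith))
    ((eventually_ge_atTop 0).mono fun x hx => Real.rpow_nonneg hx _)
  refine (((isBigO_refl (fun x : ℝ => x) atTop).mul hΘO).mul hsO).trans_eventuallyEq ?_
  filter_upwards [eventually_gt_atTop 0] with x hx
  rw [← Real.rpow_mul hx.le, hβγ, Real.inv_rpow hx.le, Real.rpow_sub hx, Real.rpow_one]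
  field_simp

theorem exists_bound_mul_rpow_mul_integral_rpow {Θ : ℝ → ℝ} {β L : ℝ} (hβ : 1 / 2 ≤ β)
    (hL : L ≠ 0) (hΘpos : ∀ v, 0 < Θ v) (hΘ : Continuous Θ)
    (h : Tendsto (fun v => |v| * Θ v) atTop (𝓝 L)) :
    ∃ C, ∀ x, 0 ≤ x →
      x * Θ x ^ (2 * β) * (∫ u in (0 : ℝ)..x, Θ u ^ (-β)) ^ ((2 * β - 1) / (β + 1)) ≤ C := by
  have hrpow (r : ℝ) : Continuous fun u => Θ u ^ r := hΘ.rpow_const fun u => Or.inl (hΘpos u).ne'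
  have hcont : Continuous fun x =>
      x * Θ x ^ (2 * β) * (∫ u in (0 : ℝ)..x, Θ u ^ (-β)) ^ ((2 * β - 1) / (β + 1)) :=
    (continuous_id.mul (hrpow _)).mul
      ((continuous_primitive (fun a b => (hrpow _).intervalIntegrable a b) 0).rpow_const
        fun _ => Or.inr (div_nonneg (by linarith) (by linarith)))
  obtain ⟨C, hC⟩ := exists_forall_norm_le_of_isBigO_one hcont
    (isBigO_one_mul_rpow_mul_integral_rpow hβ hL hΘpos hΘ h) 0
  exact ⟨C, fun x hx => (Real.le_norm_self _).trans (hC x hx)⟩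

theorem pos_of_integral_pos {f : ℝ → ℝ} (hf : ∀ u, 0 ≤ f u) {x : ℝ}
    (h : 0 < ∫ u in (0 : ℝ)..x, f u) : 0 < x := by
  by_contra! hx
  rw [integral_symm] at h
  linarith [integral_nonneg (μ := volume) hx fun u _ => hf u]

theorem div_rpow_neg_sq {t : ℝ} (ht : 0 < t) (x β : ℝ) :
    x / (t ^ (-β)) ^ 2 = x * t ^ (2 * β) := by
  rw [← Real.rpow_natCast, ← Real.rpow_mul ht.le, div_eq_mul_inv, ← Real.rpow_neg ht.le]
  ring_nf

theorem stmt9_general (β : ℝ) (hβ1 : 1 < β)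
    (Θ : ℝ → ℝ) (hΘpos : ∀ v, 0 < Θ v) (hΘC1 : ContDiff ℝ 1 Θ)
    (hΘtop : Tendsto (fun v : ℝ => |v| * Θ v) atTop (𝓝 1))
    (s : ℝ → ℝ) (hs : ∀ v, s v = ∫ u in (0 : ℝ)..v, (Θ u) ^ (-β))
    (sInv : ℝ → ℝ) (hright : ∀ w, s (sInv w) = w) :
    let ψ : ℝ → ℝ := fun w => (Θ (sInv w)) ^ (-β)
    let φ : ℝ → ℝ := fun w => sInv w / (ψ w) ^ 2
    ∃ C > 0, ∀ v : ℝ, 0 < v →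
      0 < φ v ∧ φ v ≤ C * v ^ ((1 - 2 * β) / (β + 1)) := by
  intro ψ φ
  obtain ⟨C, hC⟩ := exists_bound_mul_rpow_mul_integral_rpow (β := β) (by linarith) one_ne_zero hΘpos
    hΘC1.continuous hΘtop
  refine ⟨max C 1, by positivity, fun v hv => ?_⟩
  set x := sInv v
  have hsx : ∫ u in (0 : ℝ)..x, Θ u ^ (-β) = v := (hs x).symm.trans (hright v)
  have hx : 0 < x :=
    pos_of_integral_pos (fun u => (Real.rpow_pos_of_pos (hΘpos u) _).le) (hsx ▸ hv)
  have hφ : φ v = x * Θ x ^ (2 * β) := div_rpow_neg_sq (hΘpos x) x β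
  have hφpos : 0 < φ v := hφ ▸ mul_pos hx (Real.rpow_pos_of_pos (hΘpos x) _)
  have hexp : v ^ ((1 - 2 * β) / (β + 1)) = (v ^ ((2 * β - 1) / (β + 1)))⁻¹ := by
    rw [← Real.rpow_neg hv.le, ← neg_div, neg_sub]
  refine ⟨hφpos, ?_⟩
  rw [hexp, ← div_eq_mul_inv, le_div_iff₀ (Real.rpow_pos_of_pos hv _), hφ]
  exact (hsx ▸ hC x hx.le).trans (le_max_left _ _)

/-- Global bound for `φ(v) = s⁻¹(v)/ψ(v)²`: there is `C > 0` such that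
`0 < φ(v) ≤ C v^{(1-2β)/(β+1)}` for all `v > 0`. -/
theorem stmt9 (β : ℝ) (hβ1 : 1 < β) (hβ5 : β < 5)
    (Θ : ℝ → ℝ) (hΘpos : ∀ v, 0 < Θ v) (hΘC1 : ContDiff ℝ 1 Θ)
    (hΘeven : ∀ v, Θ (-v) = Θ v)
    (hΘtop : Tendsto (fun v : ℝ => |v| * Θ v) atTop (𝓝 1))
    (hΘbot : Tendsto (fun v : ℝ => |v| * Θ v) atBot (𝓝 1))
    (s : ℝ → ℝ) (hs : ∀ v, s v = ∫ u in (0 : ℝ)..v, (Θ u) ^ (-β))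
    (sInv : ℝ → ℝ) (hleft : ∀ v, sInv (s v) = v) (hright : ∀ w, s (sInv w) = w) :
    let ψ : ℝ → ℝ := fun w => (Θ (sInv w)) ^ (-β)
    let φ : ℝ → ℝ := fun w => sInv w / (ψ w) ^ 2
    ∃ C > 0, ∀ v : ℝ, 0 < v →
      0 < φ v ∧ φ v ≤ C * v ^ ((1 - 2 * β) / (β + 1)) :=
  stmt9_general β hβ1 Θ hΘpos hΘC1 hΘtop s hs sInv hright
end

section
/- Let α ∈ (0,1) and let φ : [0,∞) → ℝ be a smooth function with compact support. Then for every x ≥ 0, the integrals ∫_ℝ (φ((x+z)₊) − φ(x)) |z|^{-1-α} dz and ∫_0^∞ φ'(y) (y−x) |y−x|^{-1-α} dy are both absolutely convergent and ∫_ℝ (φ((x+z)₊) − φ(x)) |z|^{-1-α} dz = (1/α) ∫_0^∞ φ'(y) (y−x) |y−x|^{-1-α} dy. -/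
open MeasureTheory Filter Topology

lemma auxRpowMeasurable {c : ℝ} (hc : c ≠ 0) : Measurable (fun z : ℝ => |z| ^ c) := by
  have heq : (fun z : ℝ => |z| ^ c)
      = fun z => if z = 0 then 0 else Real.exp (Real.log |z| * c) := by
    funext z
    by_cases h : z = 0
    · simp [h, Real.zero_rpow hc]
    · rw [if_neg h, Real.rpow_def_of_pos (abs_pos.mpr h)]
  rw [heq]
  exact Measurable.ite (measurableSet_eq)
    measurable_const
    (Real.measurable_exp.comp ((Real.measurable_log.comp measurable_abs).mul measurable_const))

lemma auxIoiInt {s c : ℝ} (hs : s < -1) (hc : 0 < c) :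
    MeasureTheory.IntegrableOn (fun z : ℝ => |z| ^ s) (Set.Ioi c) :=
  (integrableOn_Ioi_rpow_of_lt hs hc).congr_fun
    (fun z hz => by rw [abs_of_pos (hc.trans hz)]) measurableSet_Ioi

lemma auxIoiVal {s c : ℝ} (hs : s < -1) (hc : 0 < c) :
    ∫ z in Set.Ioi c, |z| ^ s = -c ^ (s + 1) / (s + 1) := by
  rw [setIntegral_congr_fun measurableSet_Ioi
    (fun z hz => by show |z| ^ s = z ^ s; rw [abs_of_pos (hc.trans hz)] :
      Set.EqOn (fun z : ℝ => |z| ^ s) (fun z : ℝ => z ^ s) (Set.Ioi c))]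
  exact integral_Ioi_rpow_of_lt hs hc

lemma auxIioInt {s c : ℝ} (hs : s < -1) (hc : c < 0) :
    MeasureTheory.IntegrableOn (fun z : ℝ => |z| ^ s) (Set.Iio c) := by
  have A : MeasurableEmbedding fun x : ℝ => -x :=
    (Homeomorph.neg ℝ).measurableEmbedding
  have h1 : MeasureTheory.IntegrableOn (fun z : ℝ => |z| ^ s) (Set.Ioi (-c)) :=
    auxIoiInt hs (neg_pos.mpr hc)
  have h2 : MeasureTheory.IntegrableOn ((fun z : ℝ => |z| ^ s) ∘ (fun x : ℝ => -x))
      ((fun x : ℝ => -x) ⁻¹' (Set.Iio c)) := by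
    have hpre : ((fun x : ℝ => -x) ⁻¹' (Set.Iio c)) = Set.Ioi (-c) := by
      ext y; simp [Set.mem_Iio, Set.mem_Ioi, neg_lt]
    rw [hpre]
    exact h1.congr_fun (fun z _ => by simp [Function.comp, abs_neg]) measurableSet_Ioi
  have h3 := (A.integrableOn_map_iff (f := fun z : ℝ => |z| ^ s) (s := Set.Iio c)).mpr h2
  rwa [Measure.map_neg_eq_self (volume : Measure ℝ)] at h3

lemma auxIioVal {s c : ℝ} (hs : s < -1) (hc : c < 0) :
    ∫ z in Set.Iio c, |z| ^ s = -(-c) ^ (s + 1) / (s + 1) := by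
  rw [← MeasureTheory.integral_Iic_eq_integral_Iio]
  calc ∫ z in Set.Iic c, |z| ^ s = ∫ z in Set.Iic c, |(-z)| ^ s := by
        refine setIntegral_congr_fun measurableSet_Iic (fun z _ => by rw [abs_neg])
    _ = ∫ z in Set.Ioi (-c), |z| ^ s := integral_comp_neg_Iic c (fun z => |z| ^ s)
    _ = -(-c) ^ (s + 1) / (s + 1) := auxIoiVal hs (neg_pos.mpr hc)

lemma auxAbsRpowIcc {α : ℝ} (hα1 : α < 1) (x a b : ℝ) :
    MeasureTheory.IntegrableOn (fun t : ℝ => |t - x| ^ (-α)) (Set.Icc a b) := by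
  set L : ℝ := |a - x| + |b - x| + 1 with hLdef
  have hL0 : 0 < L := by positivity
  have hsub : Set.Icc a b ⊆ Set.Icc (x - L) x ∪ Set.Icc x (x + L) := by
    intro t ht
    have h1 := neg_abs_le (a - x)
    have h2 := le_abs_self (b - x)
    rcases le_total t x with h | h
    · exact Or.inl ⟨by simp only [hLdef]; linarith [ht.1, abs_nonneg (b - x)], h⟩
    · exact Or.inr ⟨h, by simp only [hLdef]; linarith [ht.2, abs_nonneg (a - x)]⟩
  refine MeasureTheory.IntegrableOn.mono_set (MeasureTheory.IntegrableOn.union ?_ ?_) hsub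
  · have h0 : IntervalIntegrable (fun s : ℝ => s ^ (-α)) volume 0 L :=
      intervalIntegral.intervalIntegrable_rpow' (by linarith)
    have h1 : IntervalIntegrable (fun t : ℝ => (x - t) ^ (-α)) volume x (x - L) := by
      simpa using h0.comp_sub_left x
    have h2 : MeasureTheory.IntegrableOn (fun t : ℝ => (x - t) ^ (-α)) (Set.Ioc (x - L) x) := by
      have h1s := h1.symm
      rwa [intervalIntegrable_iff, Set.uIoc_of_le (by linarith)] at h1s
    have h3 : MeasureTheory.IntegrableOn (fun t : ℝ => (x - t) ^ (-α)) (Set.Icc (x - L) x) :=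
      (integrableOn_Icc_iff_integrableOn_Ioc).mpr h2
    exact h3.congr_fun (fun t ht => by
      rw [abs_of_nonpos (by linarith [ht.2] : t - x ≤ 0), neg_sub]) measurableSet_Icc
  · have h0 : IntervalIntegrable (fun s : ℝ => s ^ (-α)) volume 0 L :=
      intervalIntegral.intervalIntegrable_rpow' (by linarith)
    have h1 : IntervalIntegrable (fun t : ℝ => (t - x) ^ (-α)) volume x (x + L) := by
      simpa [add_comm] using h0.comp_sub_right x
    have h2 : MeasureTheory.IntegrableOn (fun t : ℝ => (t - x) ^ (-α)) (Set.Ioc x (x + L)) := by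
      rwa [intervalIntegrable_iff, Set.uIoc_of_le (by linarith)] at h1
    have h3 : MeasureTheory.IntegrableOn (fun t : ℝ => (t - x) ^ (-α)) (Set.Icc x (x + L)) :=
      (integrableOn_Icc_iff_integrableOn_Ioc).mpr h2
    exact h3.congr_fun (fun t ht => by
      rw [abs_of_nonneg (by linarith [ht.1] : (0:ℝ) ≤ t - x)]) measurableSet_Icc

/-- For `α ∈ (0,1)` and `φ` smooth with compact support, for every `x ≥ 0` the
integrals `∫_ℝ (φ((x+z)₊) - φ(x)) |z|^{-1-α} dz` and
`∫_0^∞ φ'(y)(y-x)|y-x|^{-1-α} dy` are absolutely convergent and the first equals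
`1/α` times the second. -/
theorem stmt12 (α : ℝ) (hα0 : 0 < α) (hα1 : α < 1)
    (φ : ℝ → ℝ) (hφ : ContDiff ℝ (⊤ : ℕ∞) φ) (hsupp : HasCompactSupport φ) :
    ∀ x : ℝ, 0 ≤ x →
      Integrable (fun z : ℝ => (φ (max (x + z) 0) - φ x) * |z| ^ (-1 - α)) ∧
      IntegrableOn (fun y : ℝ => deriv φ y * (y - x) * |y - x| ^ (-1 - α))
        (Set.Ioi 0) ∧
      ∫ z : ℝ, (φ (max (x + z) 0) - φ x) * |z| ^ (-1 - α)
        = (1 / α) * ∫ y in Set.Ioi (0 : ℝ),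
            deriv φ y * (y - x) * |y - x| ^ (-1 - α) := by
  intro x hx
  have hs1 : (-1 - α : ℝ) < -1 := by linarith
  have hs2 : (-1 - α : ℝ) + 1 = -α := by ring
  set ψ : ℝ → ℝ := deriv φ with hψdef
  have hψc : Continuous ψ := hφ.continuous_deriv (by simp)
  have hψs : HasCompactSupport ψ := hsupp.deriv
  obtain ⟨C, hC⟩ := hψs.exists_bound_of_continuous hψc
  set u : ℝ → ℝ := fun z => max (x + z) 0 with hudef
  have hucont : Continuous u := (continuous_const.add continuous_id).max continuous_const
  have hu0 : ∀ z, 0 ≤ u z := fun z => le_max_right _ _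
  set K : ℝ × ℝ → ℝ := fun p =>
    ((Set.Ioc x (u p.1)).indicator ψ p.2 - (Set.Ioc (u p.1) x).indicator ψ p.2)
      * |p.1| ^ (-1 - α) with hKdef
  -- measurability
  have hrpowm : Measurable (fun z : ℝ => |z| ^ (-1 - α)) :=
    auxRpowMeasurable (by linarith)
  have hKm : Measurable K := by
    have hA : MeasurableSet {p : ℝ × ℝ | x < p.2 ∧ p.2 ≤ u p.1} :=
      (measurableSet_lt measurable_const measurable_snd).inter
        (measurableSet_le measurable_snd ((hucont.comp continuous_fst).measurable))
    have hB : MeasurableSet {p : ℝ × ℝ | u p.1 < p.2 ∧ p.2 ≤ x} :=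
      (measurableSet_lt ((hucont.comp continuous_fst).measurable) measurable_snd).inter
        (measurableSet_le measurable_snd measurable_const)
    have e1 : (fun p : ℝ × ℝ => (Set.Ioc x (u p.1)).indicator ψ p.2)
        = {p : ℝ × ℝ | x < p.2 ∧ p.2 ≤ u p.1}.indicator (fun p => ψ p.2) := by
      funext p
      simp only [Set.indicator_apply, Set.mem_Ioc, Set.mem_setOf_eq]
    have e2 : (fun p : ℝ × ℝ => (Set.Ioc (u p.1) x).indicator ψ p.2)
        = {p : ℝ × ℝ | u p.1 < p.2 ∧ p.2 ≤ x}.indicator (fun p => ψ p.2) := by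
      funext p
      simp only [Set.indicator_apply, Set.mem_Ioc, Set.mem_setOf_eq]
    have m1 : Measurable (fun p : ℝ × ℝ => (Set.Ioc x (u p.1)).indicator ψ p.2) := by
      rw [e1]; exact ((hψc.measurable.comp measurable_snd)).indicator hA
    have m2 : Measurable (fun p : ℝ × ℝ => (Set.Ioc (u p.1) x).indicator ψ p.2) := by
      rw [e2]; exact ((hψc.measurable.comp measurable_snd)).indicator hB
    exact (m1.sub m2).mul (hrpowm.comp measurable_fst)
  -- pointwise descriptions
  have hKzero : ∀ t : ℝ, t ≤ 0 → ∀ z : ℝ, K (z, t) = 0 := by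
    intro t ht z
    have h1 : t ∉ Set.Ioc x (u z) := fun h => absurd h.1 (by linarith)
    have h2 : t ∉ Set.Ioc (u z) x := fun h => absurd h.1 (by linarith [hu0 z])
    simp only [hKdef, Set.indicator_of_notMem h1, Set.indicator_of_notMem h2,
      sub_zero, zero_mul, sub_self]
  have hKpos : ∀ t : ℝ, x < t → ∀ z : ℝ,
      K (z, t) = (Set.Ici (t - x)).indicator (fun z => ψ t * |z| ^ (-1 - α)) z := by
    intro t ht z
    have h2 : t ∉ Set.Ioc (u z) x := fun h => absurd h.2 (by linarith)
    have hmem : t ∈ Set.Ioc x (u z) ↔ z ∈ Set.Ici (t - x) := by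
      simp only [Set.mem_Ioc, Set.mem_Ici, hudef, le_max_iff]
      constructor
      · rintro ⟨-, h | h⟩
        · linarith
        · linarith
      · intro h; exact ⟨ht, Or.inl (by linarith)⟩
    by_cases hz : z ∈ Set.Ici (t - x)
    · rw [Set.indicator_of_mem hz]
      simp only [hKdef, Set.indicator_of_mem (hmem.mpr hz), Set.indicator_of_notMem h2]
      ring
    · rw [Set.indicator_of_notMem hz]
      simp only [hKdef, Set.indicator_of_notMem (fun h => hz (hmem.mp h)),
        Set.indicator_of_notMem h2]
      ring
  have hKneg : ∀ t : ℝ, 0 < t → t < x → ∀ z : ℝ,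
      K (z, t) = -(Set.Iio (t - x)).indicator (fun z => ψ t * |z| ^ (-1 - α)) z := by
    intro t ht0 htx z
    have h1 : t ∉ Set.Ioc x (u z) := fun h => absurd h.1 (by linarith)
    have hmem : t ∈ Set.Ioc (u z) x ↔ z ∈ Set.Iio (t - x) := by
      simp only [Set.mem_Ioc, Set.mem_Iio, hudef, max_lt_iff]
      constructor
      · rintro ⟨⟨h, -⟩, -⟩; linarith
      · intro h; exact ⟨⟨by linarith, ht0⟩, le_of_lt htx⟩
    by_cases hz : z ∈ Set.Iio (t - x)
    · rw [Set.indicator_of_mem hz]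
      simp only [hKdef, Set.indicator_of_mem (hmem.mpr hz), Set.indicator_of_notMem h1]
      ring
    · rw [Set.indicator_of_notMem hz]
      simp only [hKdef, Set.indicator_of_notMem (fun h => hz (hmem.mp h)),
        Set.indicator_of_notMem h1]
      ring
  -- integrability in z for fixed good t, with arbitrary coefficient
  have hIciInt : ∀ (a : ℝ) (t : ℝ), x < t →
      Integrable ((Set.Ici (t - x)).indicator (fun z => a * |z| ^ (-1 - α))) := by
    intro a t ht
    rw [integrable_indicator_iff measurableSet_Ici]
    exact ((integrableOn_Ici_iff_integrableOn_Ioi).mpr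
      (auxIoiInt hs1 (by linarith))).const_mul a
  have hIioInt : ∀ (a : ℝ) (t : ℝ), t < x →
      Integrable ((Set.Iio (t - x)).indicator (fun z => a * |z| ^ (-1 - α))) := by
    intro a t ht
    rw [integrable_indicator_iff measurableSet_Iio]
    exact (auxIioInt hs1 (by linarith)).const_mul a
  have hIciVal : ∀ (a : ℝ) (t : ℝ), x < t →
      ∫ z, (Set.Ici (t - x)).indicator (fun z => a * |z| ^ (-1 - α)) z
        = a * ((t - x) ^ (-α) / α) := by
    intro a t ht
    rw [integral_indicator measurableSet_Ici, MeasureTheory.integral_Ici_eq_integral_Ioi,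
      integral_const_mul, auxIoiVal hs1 (by linarith : (0:ℝ) < t - x), hs2]
    rw [neg_div, div_neg, neg_neg]
  have hIioVal : ∀ (a : ℝ) (t : ℝ), t < x →
      ∫ z, (Set.Iio (t - x)).indicator (fun z => a * |z| ^ (-1 - α)) z
        = a * ((x - t) ^ (-α) / α) := by
    intro a t ht
    rw [integral_indicator measurableSet_Iio, integral_const_mul,
      auxIioVal hs1 (by linarith : t - x < 0), hs2]
    rw [neg_sub, neg_div, div_neg, neg_neg]
  have hne0 : ∀ᵐ t : ℝ, t ≠ 0 := by
    rw [ae_iff]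
    simpa using measure_singleton (0 : ℝ)
  have hnex : ∀ᵐ t : ℝ, t ≠ x := by
    rw [ae_iff]
    simpa using measure_singleton x
  have haeK : ∀ᵐ t : ℝ, Integrable (fun z => K (z, t)) := by
    filter_upwards [hne0, hnex] with t ht0 htx
    rcases lt_trichotomy t 0 with h | h | h
    · refine (integrable_zero _ _ _).congr ?_
      filter_upwards with z using (hKzero t h.le z).symm
    · exact absurd h ht0
    · rcases lt_or_gt_of_ne htx with hlt | hgt
      · refine ((hIioInt (ψ t) t hlt).neg).congr ?_
        filter_upwards with z using (hKneg t h hlt z).symm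
      · refine (hIciInt (ψ t) t hgt).congr ?_
        filter_upwards with z using (hKpos t hgt z).symm
  -- norm rewrites
  have hnormpos : ∀ t : ℝ, x < t →
      (fun z => ‖K (z, t)‖)
        = (Set.Ici (t - x)).indicator (fun z => |ψ t| * |z| ^ (-1 - α)) := by
    intro t ht
    funext z
    rw [hKpos t ht z]
    by_cases hz : z ∈ Set.Ici (t - x)
    · rw [Set.indicator_of_mem hz, Set.indicator_of_mem hz, Real.norm_eq_abs, abs_mul,
        Real.abs_rpow_of_nonneg (abs_nonneg z), abs_abs]
    · rw [Set.indicator_of_notMem hz, Set.indicator_of_notMem hz, norm_zero]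
  have hnormneg : ∀ t : ℝ, 0 < t → t < x →
      (fun z => ‖K (z, t)‖)
        = (Set.Iio (t - x)).indicator (fun z => |ψ t| * |z| ^ (-1 - α)) := by
    intro t ht0 htx
    funext z
    rw [hKneg t ht0 htx z, norm_neg]
    by_cases hz : z ∈ Set.Iio (t - x)
    · rw [Set.indicator_of_mem hz, Set.indicator_of_mem hz, Real.norm_eq_abs, abs_mul,
        Real.abs_rpow_of_nonneg (abs_nonneg z), abs_abs]
    · rw [Set.indicator_of_notMem hz, Set.indicator_of_notMem hz, norm_zero]
  -- the dominating one-variable integrable function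
  have hGint : Integrable (fun t : ℝ => |ψ t| * (|t - x| ^ (-α) / α)) := by
    obtain ⟨R, hR⟩ : ∃ R : ℝ, tsupport ψ ⊆ Set.Icc (-R) R := by
      obtain ⟨R, hR⟩ := (hψs.isBounded).subset_closedBall 0
      exact ⟨R, by simpa [Real.closedBall_eq_Icc, zero_sub, zero_add] using hR⟩
    have hWint : MeasureTheory.IntegrableOn
        (fun t : ℝ => C * (|t - x| ^ (-α) / α)) (Set.Icc (-R) R) := by
      have hdiv := (auxAbsRpowIcc hα1 x (-R) R).div_const α
      exact hdiv.const_mul C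
    have hind : Integrable ((Set.Icc (-R) R).indicator
        (fun t : ℝ => C * (|t - x| ^ (-α) / α))) := by
      rwa [integrable_indicator_iff measurableSet_Icc]
    refine hind.mono' ?_ ?_
    · have hm : Measurable (fun t : ℝ => |t - x| ^ (-α)) :=
        (auxRpowMeasurable (by linarith : (-α : ℝ) ≠ 0)).comp
          (measurable_id.sub measurable_const)
      exact (hψc.abs.aestronglyMeasurable).mul ((hm.div_const α).aestronglyMeasurable)
    · filter_upwards with t
      by_cases htS : t ∈ tsupport ψ
      · rw [Set.indicator_of_mem (hR htS)]
        have h1 : 0 ≤ |t - x| ^ (-α) / α := by positivity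
        have h2 : |ψ t| ≤ C := by simpa using hC t
        rw [Real.norm_eq_abs, abs_of_nonneg (by positivity)]
        exact mul_le_mul_of_nonneg_right h2 h1
      · have hψ0 : ψ t = 0 := image_eq_zero_of_notMem_tsupport htS
        rw [hψ0]
        simp only [abs_zero, zero_mul, norm_zero]
        by_cases htR : t ∈ Set.Icc (-R) R
        · rw [Set.indicator_of_mem htR]
          have hC0 : 0 ≤ C := le_trans (norm_nonneg (ψ 0)) (hC 0)
          positivity
        · rw [Set.indicator_of_notMem htR]
  -- integrability of K on the product space
  have hKint : Integrable K (volume.prod volume) := by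
    rw [MeasureTheory.integrable_prod_iff' hKm.aestronglyMeasurable]
    refine ⟨haeK, ?_⟩
    have hGind : Integrable ((Set.Ioi (0:ℝ)).indicator
        (fun t : ℝ => |ψ t| * (|t - x| ^ (-α) / α))) :=
      hGint.indicator measurableSet_Ioi
    refine hGind.congr ?_
    filter_upwards [hne0, hnex] with t ht0 htx
    rcases lt_trichotomy t 0 with h | h | h
    · rw [Set.indicator_of_notMem (by simpa using not_lt.mpr h.le)]
      have hz : (fun z => ‖K (z, t)‖) = fun _ => (0:ℝ) := by
        funext z; rw [hKzero t h.le z, norm_zero]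
      rw [hz, integral_zero]
    · exact absurd h ht0
    · rw [Set.indicator_of_mem (by simpa using h)]
      rcases lt_or_gt_of_ne htx with hlt | hgt
      · rw [hnormneg t h hlt, hIioVal (|ψ t|) t hlt,
          abs_of_neg (by linarith : t - x < 0), neg_sub]
      · rw [hnormpos t hgt, hIciVal (|ψ t|) t hgt,
          abs_of_pos (by linarith : (0:ℝ) < t - x)]
  -- inner t-integral equals LHS integrand
  have hinner : ∀ z : ℝ, (∫ t, K (z, t)) = (φ (u z) - φ x) * |z| ^ (-1 - α) := by
    intro z
    have hdiff : ∀ t ∈ Set.uIcc x (u z), HasDerivAt φ (ψ t) t := fun t _ =>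
      ((hφ.differentiable (by simp)) t).hasDerivAt
    have hFTC : ∫ t in x..(u z), ψ t = φ (u z) - φ x :=
      intervalIntegral.integral_deriv_eq_sub (fun t _ => (hφ.differentiable (by simp)) t)
        (hψc.intervalIntegrable _ _)
    have hmulr : (∫ t, ((Set.Ioc x (u z)).indicator ψ t
        - (Set.Ioc (u z) x).indicator ψ t) * |z| ^ (-1 - α))
        = (∫ t, ((Set.Ioc x (u z)).indicator ψ t - (Set.Ioc (u z) x).indicator ψ t))
          * |z| ^ (-1 - α) := integral_mul_const _ _
    have hsplit : (∫ t, ((Set.Ioc x (u z)).indicator ψ t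
        - (Set.Ioc (u z) x).indicator ψ t)) = φ (u z) - φ x := by
      rw [integral_sub ((integrable_indicator_iff measurableSet_Ioc).mpr
          (hψc.integrableOn_Ioc))
        ((integrable_indicator_iff measurableSet_Ioc).mpr (hψc.integrableOn_Ioc)),
        integral_indicator measurableSet_Ioc, integral_indicator measurableSet_Ioc]
      rcases le_total x (u z) with h | h
      · rw [Set.Ioc_eq_empty (not_lt.mpr h), Measure.restrict_empty, integral_zero_measure,
          sub_zero, ← intervalIntegral.integral_of_le h, hFTC]
      · rw [Set.Ioc_eq_empty (not_lt.mpr h), Measure.restrict_empty, integral_zero_measure,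
          zero_sub, ← intervalIntegral.integral_of_le h, intervalIntegral.integral_symm,
          hFTC, neg_neg]
    calc (∫ t, K (z, t)) = ∫ t, ((Set.Ioc x (u z)).indicator ψ t
          - (Set.Ioc (u z) x).indicator ψ t) * |z| ^ (-1 - α) := rfl
      _ = (φ (u z) - φ x) * |z| ^ (-1 - α) := by rw [hmulr, hsplit]
  -- first conclusion
  have hLHSint : Integrable (fun z : ℝ => (φ (u z) - φ x) * |z| ^ (-1 - α)) := by
    refine hKint.integral_prod_left.congr ?_
    filter_upwards with z using hinner z
  -- a.e. value of the z-integral on Ioi 0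
  have hpow : ∀ y : ℝ, 0 < y → y * y ^ (-1 - α) = y ^ (-α) := by
    intro y hy
    have h := Real.rpow_add hy 1 (-1 - α)
    rw [Real.rpow_one] at h
    rw [← h]
    congr 1
    ring
  have haeM : ∀ᵐ t ∂(volume.restrict (Set.Ioi (0:ℝ))),
      (∫ z, K (z, t)) = (1 / α) * (ψ t * (t - x) * |t - x| ^ (-1 - α)) := by
    filter_upwards [ae_restrict_mem measurableSet_Ioi, ae_restrict_of_ae hnex]
      with t ht htx
    rcases lt_or_gt_of_ne htx with hlt | hgt
    · have hxt : (0:ℝ) < x - t := by linarith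
      calc (∫ z, K (z, t))
          = ∫ z, -(Set.Iio (t - x)).indicator (fun z => ψ t * |z| ^ (-1 - α)) z := by
            refine integral_congr_ae ?_
            filter_upwards with z using hKneg t ht hlt z
        _ = -(ψ t * ((x - t) ^ (-α) / α)) := by
            rw [integral_neg, hIioVal (ψ t) t hlt]
        _ = (1 / α) * (ψ t * (t - x) * |t - x| ^ (-1 - α)) := by
            rw [abs_of_neg (by linarith : t - x < 0), neg_sub,
              show (t - x : ℝ) = -(x - t) by ring]
            rw [mul_neg, neg_mul, mul_assoc, hpow (x - t) hxt]
            field_simp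
    · have hxt : (0:ℝ) < t - x := by linarith
      calc (∫ z, K (z, t))
          = ∫ z, (Set.Ici (t - x)).indicator (fun z => ψ t * |z| ^ (-1 - α)) z := by
            refine integral_congr_ae ?_
            filter_upwards with z using hKpos t hgt z
        _ = ψ t * ((t - x) ^ (-α) / α) := hIciVal (ψ t) t hgt
        _ = (1 / α) * (ψ t * (t - x) * |t - x| ^ (-1 - α)) := by
            rw [abs_of_pos hxt, mul_assoc, hpow (t - x) hxt]
            field_simp
  -- second conclusion
  have hRHSint : IntegrableOn (fun y : ℝ => ψ y * (y - x) * |y - x| ^ (-1 - α))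
      (Set.Ioi 0) := by
    have h1 : IntegrableOn (fun t : ℝ =>
        (1 / α) * (ψ t * (t - x) * |t - x| ^ (-1 - α))) (Set.Ioi 0) :=
      (hKint.integral_prod_right.integrableOn).congr haeM
    have h2 := h1.const_mul α
    refine h2.congr (Filter.Eventually.of_forall fun t => ?_)
    field_simp
  -- the equality
  have heq : ∫ z : ℝ, (φ (u z) - φ x) * |z| ^ (-1 - α)
      = (1 / α) * ∫ y in Set.Ioi (0 : ℝ), ψ y * (y - x) * |y - x| ^ (-1 - α) := by
    have hswap : (∫ z, ∫ t, K (z, t)) = ∫ t, ∫ z, K (z, t) :=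
      MeasureTheory.integral_integral_swap (f := fun z t => K (z, t)) hKint
    calc ∫ z : ℝ, (φ (u z) - φ x) * |z| ^ (-1 - α)
        = ∫ z, ∫ t, K (z, t) := by
          refine integral_congr_ae ?_
          filter_upwards with z using (hinner z).symm
      _ = ∫ t, ∫ z, K (z, t) := hswap
      _ = ∫ t in Set.Ioi 0, ∫ z, K (z, t) := by
          symm
          apply setIntegral_eq_integral_of_forall_compl_eq_zero
          intro t ht
          have ht' : t ≤ 0 := not_lt.mp (by simpa using ht)
          have hz : (fun z => K (z, t)) = fun _ => (0:ℝ) :=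
            funext fun z => hKzero t ht' z
          rw [hz, integral_zero]
      _ = ∫ t in Set.Ioi 0, (1 / α) * (ψ t * (t - x) * |t - x| ^ (-1 - α)) :=
          integral_congr_ae haeM
      _ = (1 / α) * ∫ y in Set.Ioi (0 : ℝ), ψ y * (y - x) * |y - x| ^ (-1 - α) :=
          integral_const_mul _ _
  exact ⟨hLHSint, hRHSint, heq⟩
end

section
/- Let α ∈ [1,2) and let φ : [0,∞) → ℝ be a smooth compactly supported function with φ'(0) = 0. For x ≥ 0 define the compensated operator Lφ(x) = ∫_ℝ (φ((x+z)₊) − φ(x) − z φ'(x) 1_{|z|<x}) |z|^{-1-α} dz (an absolutely convergent integral), and for δ > 0 the truncated operator L^δφ(x) = ∫_{|z|>δ} (φ((x+z)₊) − φ(x)) |z|^{-1-α} dz. Then there exists a constant C_φ > 0, depending only on φ and α, such that for every δ > 0 and every x ≥ 0, |Lφ(x) − L^δφ(x)| ≤ C_φ δ^{2-α}. In particular, sup_{x≥0} |Lφ(x) − L^δφ(x)| → 0 as δ → 0, and Lφ is bounded and continuous on [0,∞). -/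
open MeasureTheory Filter Topology



lemma auxlip (f : ℝ → ℝ) (hf : Differentiable ℝ f) {M : ℝ}
    (hM : ∀ y, |deriv f y| ≤ M) (a b : ℝ) : |f b - f a| ≤ M * |b - a| := by
  have := Convex.norm_image_sub_le_of_norm_deriv_le (𝕜 := ℝ) (f := f)
    (fun x _ => hf x) (fun x _ => hM x) convex_univ (Set.mem_univ a) (Set.mem_univ b)
  simpa [Real.norm_eq_abs] using this

lemma auxtaylor (φ : ℝ → ℝ) (hφ : Differentiable ℝ φ) {M : ℝ} (hM0 : 0 ≤ M)
    (hlip : ∀ u v, |deriv φ u - deriv φ v| ≤ M * |u - v|) (a b : ℝ) :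
    |φ b - φ a - (b - a) * deriv φ a| ≤ M * |b - a| ^ 2 := by
  set g : ℝ → ℝ := fun y => φ y - y * deriv φ a with hg
  have hgd : ∀ y, HasDerivAt g (deriv φ y - deriv φ a) y := fun y =>
    ((hφ y).hasDerivAt).sub (hasDerivAt_mul_const _)
  have hmem : a ∈ Set.Icc (min a b) (max a b) := ⟨min_le_left _ _, le_max_left _ _⟩
  have hmemb : b ∈ Set.Icc (min a b) (max a b) := ⟨min_le_right _ _, le_max_right _ _⟩
  have hd : max a b - min a b = |b - a| := by rw [max_sub_min_eq_abs, abs_sub_comm]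
  have key := (convex_Icc (min a b) (max a b)).norm_image_sub_le_of_norm_hasDerivWithin_le
    (f := g) (f' := fun y => deriv φ y - deriv φ a) (C := M * |b - a|)
    (fun y _ => (hgd y).hasDerivWithinAt)
    (fun y hy => by
      have h1 : |y - a| ≤ |b - a| := by
        rw [abs_le]; constructor <;> [linarith [hy.1, hmem.2]; linarith [hy.2, hmem.1]]
      calc ‖deriv φ y - deriv φ a‖ ≤ M * |y - a| := hlip y a
        _ ≤ M * |b - a| := mul_le_mul_of_nonneg_left h1 hM0) hmem hmemb
  have heq : g b - g a = φ b - φ a - (b - a) * deriv φ a := by simp only [hg]; ring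
  calc |φ b - φ a - (b - a) * deriv φ a| = ‖g b - g a‖ := by rw [heq]; rfl
    _ ≤ M * |b - a| * ‖b - a‖ := key
    _ = M * |b - a| ^ 2 := by rw [Real.norm_eq_abs]; ring



lemma auxnegOn {f : ℝ → ℝ} {s : Set ℝ} (h : IntegrableOn f s) :
    IntegrableOn (fun z => f (-z)) ((fun z : ℝ => -z) ⁻¹' s) := by
  have A : MeasurableEmbedding (fun x : ℝ => -x) :=
    (Homeomorph.neg ℝ).isClosedEmbedding.measurableEmbedding
  have B := A.integrableOn_map_iff (f := f) (μ := (volume : Measure ℝ)) (s := s)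
  rw [Measure.map_neg_eq_self (volume : Measure ℝ)] at B
  exact B.1 h

lemma auxq_meas (α : ℝ) : Measurable (fun z : ℝ => min (z ^ 2) 1 * |z| ^ (-1 - α)) := by
  apply Measurable.mul
  · exact (continuous_pow 2).measurable.min measurable_const
  · exact (measurable_abs).pow_const (-1 - α) |>.comp measurable_id |>.mono le_rfl le_rfl

lemma auxq_le (α : ℝ) (z : ℝ) :
    min (z ^ 2) 1 * |z| ^ (-1 - α) ≤ |z| ^ (1 - α) := by
  rcases eq_or_ne z 0 with rfl | hz
  · simp
    positivity
  · have hpos : 0 < |z| := abs_pos.2 hz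
    have h2 : |z| ^ (1 - α) = z ^ 2 * |z| ^ (-1 - α) := by
      have : (1 - α) = (2 : ℝ) + (-1 - α) := by ring
      rw [this, Real.rpow_add hpos,
        show ((2:ℝ)) = ((2:ℕ):ℝ) by norm_num, Real.rpow_natCast, sq_abs]
    rw [h2]
    exact mul_le_mul_of_nonneg_right (min_le_left _ _) (Real.rpow_nonneg (abs_nonneg z) _)

lemma auxq_nonneg (α : ℝ) (z : ℝ) : 0 ≤ min (z ^ 2) 1 * |z| ^ (-1 - α) := by
  positivity

lemma auxq_even (α : ℝ) (z : ℝ) :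
    min ((-z) ^ 2) 1 * |(-z)| ^ (-1 - α) = min (z ^ 2) 1 * |z| ^ (-1 - α) := by
  rw [neg_sq, abs_neg]

lemma auxq_int (α : ℝ) (hα1 : 1 ≤ α) (hα2 : α < 2) :
    Integrable (fun z : ℝ => min (z ^ 2) 1 * |z| ^ (-1 - α)) := by
  set q : ℝ → ℝ := fun z => min (z ^ 2) 1 * |z| ^ (-1 - α) with hq
  have hmeas : Measurable q := auxq_meas α
  have P1 : IntegrableOn q (Set.Ioo (0:ℝ) 1) := by
    apply Integrable.mono' ((intervalIntegral.integrableOn_Ioo_rpow_iff zero_lt_one).2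
      (by linarith : (-1:ℝ) < 1 - α)) hmeas.aestronglyMeasurable
    filter_upwards [ae_restrict_mem measurableSet_Ioo] with z hz
    rw [Real.norm_eq_abs, abs_of_nonneg (auxq_nonneg α z)]
    calc q z ≤ |z| ^ (1 - α) := auxq_le α z
      _ = z ^ (1 - α) := by rw [abs_of_pos hz.1]
  have P2 : IntegrableOn q (Set.Ici (1:ℝ)) := by
    rw [integrableOn_Ici_iff_integrableOn_Ioi]
    apply Integrable.mono' (integrableOn_Ioi_rpow_of_lt (by linarith : (-1) - α < -1)
      zero_lt_one) hmeas.aestronglyMeasurable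
    filter_upwards [ae_restrict_mem measurableSet_Ioi] with z hz
    rw [Real.norm_eq_abs, abs_of_nonneg (auxq_nonneg α z)]
    have h0 : (0:ℝ) < z := lt_trans zero_lt_one hz
    calc q z ≤ 1 * |z| ^ (-1 - α) :=
          mul_le_mul_of_nonneg_right (min_le_right _ _) (Real.rpow_nonneg (abs_nonneg z) _)
      _ = z ^ (-1 - α) := by rw [one_mul, abs_of_pos h0]
  have Ppos : IntegrableOn q (Set.Ioi (0:ℝ)) := by
    have := P1.union P2
    rwa [Set.Ioo_union_Ici_eq_Ioi zero_lt_one] at this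
  have Pneg : IntegrableOn q (Set.Iio (0:ℝ)) := by
    have h := auxnegOn Ppos
    have hpre : (fun z : ℝ => -z) ⁻¹' Set.Ioi 0 = Set.Iio 0 := by
      ext z; simp [neg_pos]
    rw [hpre] at h
    have : (fun z : ℝ => q (-z)) = q := by
      funext z; simp only [hq]; exact auxq_even α z
    rwa [this] at h
  have Pz : IntegrableOn q ({0} : Set ℝ) := by
    apply (integrableOn_singleton_iff).mpr
    right; rw [Real.volume_singleton]; exact ENNReal.zero_lt_top
  rw [← integrableOn_univ]
  have : (Set.Iio (0:ℝ)) ∪ (Set.Ici 0) = Set.univ := Set.Iio_union_Ici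
  rw [← this]
  apply Pneg.union
  rw [integrableOn_Ici_iff_integrableOn_Ioi]
  exact Ppos

lemma auxtail_int (α : ℝ) (hα : 0 < α) {δ : ℝ} (hδ : 0 < δ) :
    IntegrableOn (fun z : ℝ => |z| ^ (-1 - α)) {z : ℝ | δ < |z|} := by
  have hmeas : Measurable (fun z : ℝ => |z| ^ (-1 - α)) :=
    (measurable_abs).pow_const (-1 - α)
  have hset : {z : ℝ | δ < |z|} = Set.Iio (-δ) ∪ Set.Ioi δ := by
    ext z; simp only [Set.mem_setOf_eq, Set.mem_union, Set.mem_Iio, Set.mem_Ioi]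
    rw [lt_abs]; constructor
    · rintro (h | h); exacts [Or.inr h, Or.inl (by linarith)]
    · rintro (h | h); exacts [Or.inr (by linarith), Or.inl h]
  have P2 : IntegrableOn (fun z : ℝ => |z| ^ (-1 - α)) (Set.Ioi δ) := by
    apply Integrable.mono' (integrableOn_Ioi_rpow_of_lt (by linarith : (-1) - α < -1) hδ)
      hmeas.aestronglyMeasurable
    filter_upwards [ae_restrict_mem measurableSet_Ioi] with z hz
    rw [Real.norm_eq_abs, abs_of_nonneg (Real.rpow_nonneg (abs_nonneg z) _),
      abs_of_pos (lt_trans hδ hz)]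
  have P1 : IntegrableOn (fun z : ℝ => |z| ^ (-1 - α)) (Set.Iio (-δ)) := by
    have h := auxnegOn P2
    have hpre : (fun z : ℝ => -z) ⁻¹' Set.Ioi δ = Set.Iio (-δ) := by
      ext z; simp only [Set.mem_preimage, Set.mem_Ioi, Set.mem_Iio]; constructor <;> intro <;> linarith
    rw [hpre] at h
    have : (fun z : ℝ => |(-z)| ^ (-1 - α)) = fun z : ℝ => |z| ^ (-1 - α) := by
      funext z; rw [abs_neg]
    rwa [this] at h
  rw [hset]; exact P1.union P2

lemma auxnear_int (α : ℝ) (hα2 : α < 2) {δ : ℝ} (hδ : 0 < δ) :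
    IntegrableOn (fun z : ℝ => |z| ^ (1 - α)) (Set.Icc (-δ) δ) := by
  have hmeas : Measurable (fun z : ℝ => |z| ^ (1 - α)) :=
    (measurable_abs).pow_const (1 - α)
  have P2' : IntegrableOn (fun z : ℝ => |z| ^ (1 - α)) (Set.Ioo 0 δ) := by
    apply Integrable.mono' ((intervalIntegral.integrableOn_Ioo_rpow_iff hδ).2
      (by linarith : (-1:ℝ) < 1 - α)) hmeas.aestronglyMeasurable
    filter_upwards [ae_restrict_mem measurableSet_Ioo] with z hz
    rw [Real.norm_eq_abs, abs_of_nonneg (Real.rpow_nonneg (abs_nonneg z) _),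
      abs_of_pos hz.1]
  have P2 : IntegrableOn (fun z : ℝ => |z| ^ (1 - α)) (Set.Icc 0 δ) :=
    P2'.congr_set_ae (Ioo_ae_eq_Icc (α := ℝ) (μ := volume) (a := 0) (b := δ)).symm
  have P1 : IntegrableOn (fun z : ℝ => |z| ^ (1 - α)) (Set.Ico (-δ) 0) := by
    have h := auxnegOn (P2.mono_set Set.Ioc_subset_Icc_self)
    have hpre : (fun z : ℝ => -z) ⁻¹' Set.Ioc 0 δ = Set.Ico (-δ) 0 := by
      ext z; simp only [Set.mem_preimage, Set.mem_Ioc, Set.mem_Ico]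
      constructor <;> rintro ⟨h1, h2⟩ <;> constructor <;> linarith
    rw [hpre] at h
    have : (fun z : ℝ => |(-z)| ^ (1 - α)) = fun z : ℝ => |z| ^ (1 - α) := by
      funext z; rw [abs_neg]
    rwa [this] at h
  have := P1.union P2
  rwa [Set.Ico_union_Icc_eq_Icc (by linarith) hδ.le] at this

lemma auxnear_val (α : ℝ) (hα2 : α < 2) {δ : ℝ} (hδ : 0 < δ) :
    ∫ z in Set.Icc (-δ) δ, |z| ^ (1 - α) = 2 * (δ ^ (2 - α) / (2 - α)) := by
  have h1 : ∫ z in Set.Icc (-δ) δ, |z| ^ (1 - α)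
      = ∫ z in (-δ)..δ, |z| ^ (1 - α) := by
    rw [intervalIntegral.integral_of_le (by linarith : -δ ≤ δ),
      setIntegral_congr_set Ioc_ae_eq_Icc]
  have hint : IntervalIntegrable (fun z : ℝ => |z| ^ (1 - α)) volume 0 δ := by
    rw [intervalIntegrable_iff_integrableOn_Ioc_of_le hδ.le]
    exact ((auxnear_int α hα2 hδ).mono_set (fun z hz => ⟨by linarith [hz.1], hz.2⟩))
  have hint2 : IntervalIntegrable (fun z : ℝ => |z| ^ (1 - α)) volume (-δ) 0 := by
    rw [intervalIntegrable_iff_integrableOn_Ioc_of_le (by linarith : -δ ≤ 0)]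
    exact ((auxnear_int α hα2 hδ).mono_set (fun z hz => ⟨hz.1.le, by linarith [hz.2]⟩))
  have hneg : ∫ z in (-δ)..(0:ℝ), |z| ^ (1 - α) = ∫ z in (0:ℝ)..δ, |z| ^ (1 - α) := by
    have : (fun z : ℝ => |z| ^ (1 - α)) = fun z : ℝ => |(-z)| ^ (1 - α) := by
      funext z; rw [abs_neg]
    nth_rewrite 1 [this]
    rw [intervalIntegral.integral_comp_neg (fun z : ℝ => |z| ^ (1 - α))]
    norm_num
  have hval : ∫ z in (0:ℝ)..δ, |z| ^ (1 - α) = δ ^ (2 - α) / (2 - α) := by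
    have hcong : ∫ z in (0:ℝ)..δ, |z| ^ (1 - α) = ∫ z in (0:ℝ)..δ, z ^ (1 - α) := by
      apply intervalIntegral.integral_congr
      intro z hz
      rw [Set.uIcc_of_le hδ.le] at hz
      simp only [abs_of_nonneg hz.1]
    rw [hcong, integral_rpow (Or.inl (by linarith : (-1:ℝ) < 1 - α))]
    rw [show (1 - α + 1) = 2 - α by ring, Real.zero_rpow (by linarith : (2:ℝ) - α ≠ 0)]
    ring
  rw [h1, ← intervalIntegral.integral_add_adjacent_intervals hint2 hint, hneg, hval]
  ring



lemma auxodd (g : ℝ → ℝ) (hodd : ∀ z, g (-z) = - g z) {S : Set ℝ}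
    (hS : MeasurableSet S) (hsym : ∀ z : ℝ, -z ∈ S ↔ z ∈ S) :
    ∫ z in S, g z = 0 := by
  have h1 : ∫ z in S, g z = ∫ z, S.indicator g z := (integral_indicator hS).symm
  have h3 : ∀ z, S.indicator g (-z) = - S.indicator g z := by
    intro z; by_cases h : z ∈ S
    · rw [Set.indicator_of_mem h, Set.indicator_of_mem ((hsym z).2 h), hodd]
    · rw [Set.indicator_of_notMem h,
        Set.indicator_of_notMem (fun hc => h ((hsym z).1 hc)), neg_zero]
  have h2 : ∫ z, S.indicator g z = - ∫ z, S.indicator g z := by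
    nth_rewrite 1 [← integral_neg_eq_self (S.indicator g) volume]
    simp_rw [h3]
    rw [integral_neg]
  rw [h1]; linarith [h2]

lemma auxind (φ : ℝ → ℝ) {M1 R : ℝ} (hM1 : ∀ y, |deriv φ y| ≤ M1)
    (hRpos : 0 ≤ R) (hR : ∀ y, R ≤ |y| → deriv φ y = 0) (x z : ℝ) (hx : 0 ≤ x) :
    |(if |z| < x then z * deriv φ x else 0)| ≤ R * M1 := by
  have hM1n : 0 ≤ M1 := le_trans (abs_nonneg _) (hM1 0)
  by_cases hc : |z| < x
  · rw [if_pos hc]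
    by_cases hd : deriv φ x = 0
    · simp [hd]; positivity
    · have hxR : |x| < R := by
        by_contra hcon
        exact hd (hR x (not_lt.1 hcon))
      have hxx : x ≤ R := le_of_lt (lt_of_le_of_lt (le_abs_self x) hxR)
      rw [abs_mul]
      exact mul_le_mul (by linarith [abs_nonneg z]) (hM1 x) (abs_nonneg _) hRpos
  · rw [if_neg hc]; simp; positivity



lemma auxnum (φ : ℝ → ℝ) (hφd : Differentiable ℝ φ) (h0 : deriv φ 0 = 0)
    {M0 M1 M2 R : ℝ} (hM0 : ∀ y, |φ y| ≤ M0) (hM1 : ∀ y, |deriv φ y| ≤ M1)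
    (hM2 : 0 ≤ M2) (hlip : ∀ u v, |deriv φ u - deriv φ v| ≤ M2 * |u - v|)
    (hRpos : 0 ≤ R) (hR : ∀ y, R ≤ |y| → deriv φ y = 0)
    (x z : ℝ) (hx : 0 ≤ x) :
    |φ (max (x + z) 0) - φ x - (if |z| < x then z * deriv φ x else 0)|
      ≤ (2 * M2 + (2 * M0 + R * M1)) * min (z ^ 2) 1 := by
  have hM0n : 0 ≤ M0 := le_trans (abs_nonneg _) (hM0 0)
  have hM1n : 0 ≤ M1 := le_trans (abs_nonneg _) (hM1 0)
  have hzabs : z ^ 2 = |z| ^ 2 := (sq_abs z).symm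
  by_cases h1 : |z| ≤ 1
  · have hmin : min (z ^ 2) 1 = z ^ 2 := min_eq_left (by nlinarith [abs_nonneg z])
    rw [hmin]
    by_cases h2 : |z| < x
    · rw [if_pos h2]
      have hxz : (0:ℝ) ≤ x + z := by
        have := neg_lt_of_abs_lt h2; linarith
      rw [max_eq_left hxz]
      have ht := auxtaylor φ hφd hM2 hlip x (x + z)
      have hba : x + z - x = z := by ring
      rw [hba] at ht
      calc |φ (x + z) - φ x - z * deriv φ x| ≤ M2 * |z| ^ 2 := ht
        _ ≤ (2 * M2 + (2 * M0 + R * M1)) * z ^ 2 := by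
            rw [hzabs]
            nlinarith [sq_nonneg (|z|), mul_nonneg hM0n (sq_nonneg (|z|)),
              mul_nonneg (mul_nonneg hRpos hM1n) (sq_nonneg (|z|)),
              mul_nonneg hM2 (sq_nonneg (|z|))]
    · rw [if_neg h2]
      push_neg at h2
      set p := max (x + z) 0 with hp
      have hzn : 0 ≤ |z| := abs_nonneg z
      have hp0 : 0 ≤ p := le_max_right _ _
      have hpb : p ≤ 2 * |z| := by
        have : x + z ≤ 2 * |z| := by
          have := le_abs_self z; linarith
        exact max_le this (by linarith)
      have hpx : |p - x| ≤ |z| := by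
        rcases le_or_gt 0 (x + z) with h | h
        · rw [hp, max_eq_left h]
          simpa using abs_le.2 ⟨by linarith [neg_abs_le z], by linarith [le_abs_self z]⟩
        · rw [hp, max_eq_right h.le]
          rw [abs_le]
          constructor
          · linarith
          · linarith [neg_abs_le z]
      have key := Convex.norm_image_sub_le_of_norm_deriv_le (𝕜 := ℝ) (f := φ)
        (s := Set.Icc 0 (2 * |z|)) (C := M2 * (2 * |z|))
        (fun y _ => hφd y)
        (fun y hy => by
          have hb : |deriv φ y - deriv φ 0| ≤ M2 * |y - 0| := hlip y 0
          rw [h0, sub_zero, sub_zero] at hb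
          have : |y| ≤ 2 * |z| := by
            rw [abs_of_nonneg hy.1]; exact hy.2
          calc ‖deriv φ y‖ ≤ M2 * |y| := hb
            _ ≤ M2 * (2 * |z|) := mul_le_mul_of_nonneg_left this hM2)
        (convex_Icc _ _) ⟨hx, by linarith⟩ ⟨hp0, hpb⟩
      simp only [Real.norm_eq_abs] at key
      calc |φ p - φ x - 0| = |φ p - φ x| := by rw [sub_zero]
        _ ≤ M2 * (2 * |z|) * |p - x| := key
        _ ≤ M2 * (2 * |z|) * |z| := by
            apply mul_le_mul_of_nonneg_left hpx (by positivity)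
        _ ≤ (2 * M2 + (2 * M0 + R * M1)) * z ^ 2 := by
            rw [hzabs]
            nlinarith [mul_nonneg hM0n (sq_nonneg (|z|)),
              mul_nonneg (mul_nonneg hRpos hM1n) (sq_nonneg (|z|)),
              mul_nonneg hM2 (sq_nonneg (|z|)), sq_nonneg (|z|)]
  · push_neg at h1
    have hmin : min (z ^ 2) 1 = 1 := min_eq_right (by nlinarith)
    rw [hmin, mul_one]
    have hind : |(if |z| < x then z * deriv φ x else 0)| ≤ R * M1 := by
      by_cases hc : |z| < x
      · rw [if_pos hc]
        by_cases hd : deriv φ x = 0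
        · simp [hd]; positivity
        · have hxR : |x| < R := by
            by_contra hcon
            exact hd (hR x (not_lt.1 hcon))
          have hxx : x ≤ R := le_of_lt (lt_of_le_of_lt (le_abs_self x) hxR)
          rw [abs_mul]
          exact mul_le_mul (by linarith) (hM1 x) (abs_nonneg _) hRpos
      · rw [if_neg hc]; simp; positivity
    obtain ⟨i1, i2⟩ := abs_le.1 hind
    obtain ⟨p1, p2⟩ := abs_le.1 (hM0 (max (x + z) 0))
    obtain ⟨q1, q2⟩ := abs_le.1 (hM0 x)
    rw [abs_le]
    constructor <;> [linarith; linarith]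
/-- For `α ∈ [1,2)` and `φ` smooth, compactly supported with `φ'(0) = 0`, the
compensated operator `Lφ` is well defined (absolutely convergent integral), and
the truncated operators `L^δφ` satisfy `|Lφ(x) - L^δφ(x)| ≤ C_φ δ^{2-α}`
uniformly in `x ≥ 0`; in particular `sup_{x≥0}|Lφ(x) - L^δφ(x)| → 0` as
`δ → 0⁺`, and `Lφ` is bounded and continuous on `[0,∞)`. -/
theorem stmt13 (α : ℝ) (hα1 : 1 ≤ α) (hα2 : α < 2)
    (φ : ℝ → ℝ) (hφ : ContDiff ℝ (⊤ : ℕ∞) φ) (hsupp : HasCompactSupport φ)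
    (h0 : deriv φ 0 = 0) :
    let Lop : ℝ → ℝ := fun x =>
      ∫ z : ℝ, (φ (max (x + z) 0) - φ x -
        (if |z| < x then z * deriv φ x else 0)) * |z| ^ (-1 - α)
    let Ldel : ℝ → ℝ → ℝ := fun δ x =>
      ∫ z in {z : ℝ | δ < |z|}, (φ (max (x + z) 0) - φ x) * |z| ^ (-1 - α)
    (∀ x : ℝ, 0 ≤ x →
      Integrable (fun z : ℝ => (φ (max (x + z) 0) - φ x -
        (if |z| < x then z * deriv φ x else 0)) * |z| ^ (-1 - α))) ∧
    (∃ C > 0, ∀ δ : ℝ, 0 < δ → ∀ x : ℝ, 0 ≤ x →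
      |Lop x - Ldel δ x| ≤ C * δ ^ (2 - α)) ∧
    Tendsto (fun δ : ℝ => ⨆ x : Set.Ici (0 : ℝ), |Lop x.1 - Ldel δ x.1|)
      (nhdsWithin 0 (Set.Ioi 0)) (𝓝 0) ∧
    (∃ B : ℝ, ∀ x : ℝ, 0 ≤ x → |Lop x| ≤ B) ∧
    ContinuousOn Lop (Set.Ici 0) := by
  intro Lop Ldel
  -- basic smoothness facts
  have hphi : ContDiff ℝ (((⊤ : ℕ∞)) : WithTop ℕ∞) φ := hφ.of_le (by simp)
  have hd1 : Differentiable ℝ φ := hφ.differentiable (by simp)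
  have hφ' : ContDiff ℝ (((⊤ : ℕ∞)) : WithTop ℕ∞) (deriv φ) := (contDiff_infty_iff_deriv.mp hphi).2
  have hd2 : Differentiable ℝ (deriv φ) := (contDiff_infty_iff_deriv.mp hφ').1
  have hc1 : Continuous (deriv φ) := hφ'.continuous
  have hc2 : Continuous (deriv (deriv φ)) := ((contDiff_infty_iff_deriv.mp hφ').2).continuous
  obtain ⟨M0, hM0⟩ := hsupp.exists_bound_of_continuous hphi.continuous
  obtain ⟨M1, hM1⟩ := (hsupp.deriv).exists_bound_of_continuous hc1
  obtain ⟨M2, hM2⟩ := ((hsupp.deriv).deriv).exists_bound_of_continuous hc2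
  simp only [Real.norm_eq_abs] at hM0 hM1 hM2
  have hM0n : 0 ≤ M0 := le_trans (abs_nonneg _) (hM0 0)
  have hM1n : 0 ≤ M1 := le_trans (abs_nonneg _) (hM1 0)
  have hM2n : 0 ≤ M2 := le_trans (abs_nonneg _) (hM2 0)
  have hlip : ∀ u v, |deriv φ u - deriv φ v| ≤ M2 * |u - v| := fun u v =>
    auxlip (deriv φ) hd2 hM2 v u
  obtain ⟨r, hr⟩ := ((hsupp.deriv).isBounded).subset_closedBall (0 : ℝ)
  set R : ℝ := max r 0 + 1 with hRdef
  have hRpos : (0:ℝ) ≤ R := by positivity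
  have hR : ∀ y, R ≤ |y| → deriv φ y = 0 := by
    intro y hy
    by_contra hne
    have h1 : y ∈ tsupport (deriv φ) := subset_tsupport _ hne
    have h2 := hr h1
    rw [Metric.mem_closedBall, Real.dist_eq, sub_zero] at h2
    have : r ≤ max r 0 := le_max_left _ _
    linarith
  set Cb : ℝ := 2 * M2 + (2 * M0 + R * M1) with hCbdef
  have hCbn : 0 ≤ Cb := by
    have : 0 ≤ R * M1 := mul_nonneg hRpos hM1n
    rw [hCbdef]; linarith
  have hnum : ∀ x, 0 ≤ x → ∀ z,
      |φ (max (x + z) 0) - φ x - (if |z| < x then z * deriv φ x else 0)|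
        ≤ Cb * min (z ^ 2) 1 := fun x hx z =>
    auxnum φ hd1 h0 hM0 hM1 hM2n hlip hRpos hR x z hx
  have hFmeas : ∀ x : ℝ, AEStronglyMeasurable (fun z : ℝ =>
      (φ (max (x + z) 0) - φ x - (if |z| < x then z * deriv φ x else 0))
        * |z| ^ (-1 - α)) volume := by
    intro x
    apply Measurable.aestronglyMeasurable
    apply Measurable.mul
    · apply Measurable.sub
      · exact ((hphi.continuous.comp
          ((continuous_const.add continuous_id).max continuous_const)).measurable).sub
          measurable_const
      · exact Measurable.ite (measurableSet_lt measurable_abs measurable_const)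
          (measurable_id.mul_const _) measurable_const
    · exact measurable_abs.pow_const _
  have hFb : ∀ x, 0 ≤ x → ∀ z : ℝ,
      ‖(φ (max (x + z) 0) - φ x - (if |z| < x then z * deriv φ x else 0))
        * |z| ^ (-1 - α)‖ ≤ Cb * (min (z ^ 2) 1 * |z| ^ (-1 - α)) := by
    intro x hx z
    rw [Real.norm_eq_abs, abs_mul, abs_of_nonneg (Real.rpow_nonneg (abs_nonneg z) _)]
    calc |φ (max (x + z) 0) - φ x - (if |z| < x then z * deriv φ x else 0)|
          * |z| ^ (-1 - α)
        ≤ (Cb * min (z ^ 2) 1) * |z| ^ (-1 - α) :=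
          mul_le_mul_of_nonneg_right (hnum x hx z) (Real.rpow_nonneg (abs_nonneg z) _)
      _ = Cb * (min (z ^ 2) 1 * |z| ^ (-1 - α)) := by ring
  have hqCint : Integrable (fun z : ℝ => Cb * (min (z ^ 2) 1 * |z| ^ (-1 - α))) :=
    (auxq_int α hα1 hα2).const_mul Cb
  have hInt : ∀ x : ℝ, 0 ≤ x →
      Integrable (fun z : ℝ => (φ (max (x + z) 0) - φ x -
        (if |z| < x then z * deriv φ x else 0)) * |z| ^ (-1 - α)) := fun x hx =>
    hqCint.mono' (hFmeas x) (ae_of_all _ (hFb x hx))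
  -- the splitting identity
  have hkey : ∀ δ : ℝ, 0 < δ → ∀ x : ℝ, 0 ≤ x →
      Lop x - Ldel δ x = ∫ z in Set.Icc (-δ) δ,
        (φ (max (x + z) 0) - φ x - (if |z| < x then z * deriv φ x else 0))
          * |z| ^ (-1 - α) := by
    intro δ hδ x hx
    have hSm : MeasurableSet {z : ℝ | δ < |z|} :=
      measurableSet_lt measurable_const measurable_abs
    have hScompl : {z : ℝ | δ < |z|}ᶜ = Set.Icc (-δ) δ := by
      ext z
      simp [Set.mem_compl_iff, Set.mem_Icc, not_lt, abs_le]
    have hsplit := integral_add_compl hSm (hInt x hx)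
    have hcompint : IntegrableOn (fun z : ℝ =>
        (if |z| < x then z * deriv φ x else 0) * |z| ^ (-1 - α)) {z : ℝ | δ < |z|} := by
      apply Integrable.mono' ((auxtail_int α (by linarith) hδ).const_mul (R * M1))
      · exact (Measurable.ite (measurableSet_lt measurable_abs measurable_const)
          (measurable_id.mul_const _) measurable_const).mul
          (measurable_abs.pow_const _) |>.aestronglyMeasurable
      · apply ae_of_all
        intro z
        rw [Real.norm_eq_abs, abs_mul, abs_of_nonneg (Real.rpow_nonneg (abs_nonneg z) _)]
        exact mul_le_mul_of_nonneg_right (auxind φ hM1 hRpos hR x z hx)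
          (Real.rpow_nonneg (abs_nonneg z) _)
    have hzero : ∫ z in {z : ℝ | δ < |z|},
        (if |z| < x then z * deriv φ x else 0) * |z| ^ (-1 - α) = 0 := by
      apply auxodd _ _ hSm
      · intro z; simp only [Set.mem_setOf_eq, abs_neg]
      · intro z
        simp only [abs_neg]
        split_ifs <;> ring
    have hFint_S : IntegrableOn (fun z : ℝ => (φ (max (x + z) 0) - φ x -
        (if |z| < x then z * deriv φ x else 0)) * |z| ^ (-1 - α)) {z : ℝ | δ < |z|} :=
      (hInt x hx).integrableOn
    have hLdel : Ldel δ x = ∫ z in {z : ℝ | δ < |z|},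
        (φ (max (x + z) 0) - φ x - (if |z| < x then z * deriv φ x else 0))
          * |z| ^ (-1 - α) := by
      have h1 : Ldel δ x = ∫ z in {z : ℝ | δ < |z|},
          ((φ (max (x + z) 0) - φ x - (if |z| < x then z * deriv φ x else 0))
            * |z| ^ (-1 - α)
           + (if |z| < x then z * deriv φ x else 0) * |z| ^ (-1 - α)) := by
        show (∫ z in {z : ℝ | δ < |z|}, (φ (max (x + z) 0) - φ x) * |z| ^ (-1 - α)) = _
        congr 1
        funext z
        ring
      rw [h1, integral_add hFint_S hcompint, hzero, add_zero]
    have h2 : Lop x = (∫ z in {z : ℝ | δ < |z|},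
        (φ (max (x + z) 0) - φ x - (if |z| < x then z * deriv φ x else 0))
          * |z| ^ (-1 - α))
        + ∫ z in {z : ℝ | δ < |z|}ᶜ,
        (φ (max (x + z) 0) - φ x - (if |z| < x then z * deriv φ x else 0))
          * |z| ^ (-1 - α) := by
      rw [hsplit]
    rw [h2, hLdel, hScompl]
    ring
  -- quantitative bound
  have hbound2 : ∀ δ : ℝ, 0 < δ → ∀ x : ℝ, 0 ≤ x →
      |Lop x - Ldel δ x| ≤ (2 * Cb / (2 - α)) * δ ^ (2 - α) := by
    intro δ hδ x hx
    rw [hkey δ hδ x hx, ← Real.norm_eq_abs]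
    have hb : ∀ z : ℝ, ‖(φ (max (x + z) 0) - φ x -
        (if |z| < x then z * deriv φ x else 0)) * |z| ^ (-1 - α)‖
          ≤ Cb * |z| ^ (1 - α) := fun z =>
      le_trans (hFb x hx z) (mul_le_mul_of_nonneg_left (auxq_le α z) hCbn)
    calc ‖∫ z in Set.Icc (-δ) δ, (φ (max (x + z) 0) - φ x -
          (if |z| < x then z * deriv φ x else 0)) * |z| ^ (-1 - α)‖
        ≤ ∫ z in Set.Icc (-δ) δ, Cb * |z| ^ (1 - α) :=
          norm_integral_le_of_norm_le ((auxnear_int α hα2 hδ).const_mul Cb)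
            (ae_of_all _ hb)
      _ = Cb * ∫ z in Set.Icc (-δ) δ, |z| ^ (1 - α) := integral_const_mul _ _
      _ = Cb * (2 * (δ ^ (2 - α) / (2 - α))) := by rw [auxnear_val α hα2 hδ]
      _ = (2 * Cb / (2 - α)) * δ ^ (2 - α) := by ring
  set C : ℝ := 2 * Cb / (2 - α) + 1 with hCdef
  have hCpos : 0 < C := by
    have h1 : 0 ≤ 2 * Cb / (2 - α) := div_nonneg (by linarith) (by linarith)
    rw [hCdef]; linarith
  have hfinal2 : ∀ δ : ℝ, 0 < δ → ∀ x : ℝ, 0 ≤ x →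
      |Lop x - Ldel δ x| ≤ C * δ ^ (2 - α) := by
    intro δ hδ x hx
    refine le_trans (hbound2 δ hδ x hx) ?_
    have hp : 0 ≤ δ ^ (2 - α) := Real.rpow_nonneg hδ.le _
    have : 2 * Cb / (2 - α) ≤ C := by rw [hCdef]; linarith
    exact mul_le_mul_of_nonneg_right this hp
  -- sup convergence
  have hsup : Tendsto (fun δ : ℝ => ⨆ x : Set.Ici (0 : ℝ), |Lop x.1 - Ldel δ x.1|)
      (nhdsWithin 0 (Set.Ioi 0)) (𝓝 0) := by
    apply squeeze_zero' (g := fun δ : ℝ => C * δ ^ (2 - α))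
    · filter_upwards [self_mem_nhdsWithin] with δ _
      exact Real.iSup_nonneg fun x => abs_nonneg _
    · filter_upwards [self_mem_nhdsWithin] with δ hδ
      apply Real.iSup_le
      · rintro ⟨x, hx⟩
        exact hfinal2 δ hδ x hx
      · exact mul_nonneg hCpos.le (Real.rpow_nonneg (le_of_lt hδ) _)
    · have h1 : ContinuousAt (fun d : ℝ => d ^ (2 - α)) 0 :=
        Real.continuousAt_rpow_const 0 (2 - α) (Or.inr (by linarith))
      have h2 : Tendsto (fun d : ℝ => d ^ (2 - α)) (𝓝 0) (𝓝 0) := by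
        have := h1.tendsto
        rwa [Real.zero_rpow (by linarith : (2:ℝ) - α ≠ 0)] at this
      have h3 : Tendsto (fun d : ℝ => C * d ^ (2 - α)) (nhdsWithin 0 (Set.Ioi 0))
          (𝓝 (C * 0)) := (h2.const_mul C).mono_left nhdsWithin_le_nhds
      simpa using h3
  -- boundedness
  have hbdd : ∀ x : ℝ, 0 ≤ x →
      |Lop x| ≤ ∫ z : ℝ, Cb * (min (z ^ 2) 1 * |z| ^ (-1 - α)) := by
    intro x hx
    rw [← Real.norm_eq_abs]
    exact norm_integral_le_of_norm_le hqCint (ae_of_all _ (hFb x hx))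
  -- continuity
  have hcont : ContinuousOn Lop (Set.Ici 0) := by
    intro x hx
    have hxx : (0:ℝ) ≤ x := hx
    have hLopEq : Lop = fun x : ℝ => ∫ z : ℝ,
        (φ (max (x + z) 0) - φ x - (if |z| < x then z * deriv φ x else 0))
          * |z| ^ (-1 - α) := rfl
    rw [ContinuousWithinAt, hLopEq]
    apply tendsto_integral_filter_of_dominated_convergence
      (fun z : ℝ => Cb * (min (z ^ 2) 1 * |z| ^ (-1 - α)))
    · exact Eventually.of_forall fun x' => hFmeas x'
    · filter_upwards [self_mem_nhdsWithin] with x' hx'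
      exact ae_of_all _ (hFb x' hx')
    · exact hqCint
    · have hfin : volume ({x, -x} : Set ℝ) = 0 :=
        (Set.toFinite _).measure_zero _
      filter_upwards [measure_eq_zero_iff_ae_notMem.1 hfin] with z hz
      have hz1 : |z| ≠ x := by
        intro h
        rcases (abs_eq hxx).1 h with h' | h'
        · exact hz (by simp [h'])
        · exact hz (by simp [h'])
      apply Tendsto.mono_left _ nhdsWithin_le_nhds
      have hca : ContinuousAt (fun x' : ℝ =>
          (φ (max (x' + z) 0) - φ x' - (if |z| < x' then z * deriv φ x' else 0))
            * |z| ^ (-1 - α)) x := by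
        apply ContinuousAt.mul _ continuousAt_const
        apply ContinuousAt.sub
        · exact ((hphi.continuous.comp
            ((continuous_id.add continuous_const).max continuous_const)).continuousAt).sub
            hphi.continuous.continuousAt
        · rcases lt_or_gt_of_ne hz1 with hlt | hgt
          · have hev : (fun x' : ℝ => (if |z| < x' then z * deriv φ x' else 0))
                =ᶠ[𝓝 x] fun x' => z * deriv φ x' := by
              filter_upwards [eventually_gt_nhds hlt] with x' h'
              rw [if_pos h']
            exact ContinuousAt.congr ((continuous_const.mul hc1).continuousAt) hev.symm
          · have hev : (fun x' : ℝ => (if |z| < x' then z * deriv φ x' else 0))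
                =ᶠ[𝓝 x] fun _ => 0 := by
              filter_upwards [eventually_lt_nhds hgt] with x' h'
              rw [if_neg (not_lt.mpr h'.le)]
            exact ContinuousAt.congr continuousAt_const hev.symm
      exact hca
  exact ⟨hInt, ⟨C, hCpos, hfinal2⟩, hsup, ⟨_, hbdd⟩, hcont⟩
end
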